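/- arXiv:2104.09464 — 2 statements merged into one kernel-verified Lean document; each statement's English description precedes it below -/
import Mathlib

section
/- If l₁ ≤ d < l₂ < 2d, l₂ ≤ n − 2d, l₁ + l₂ > 2d, and l₁ + l₂ > n − 2d, then the two-contour system has exactly two possible asymptotic average velocities: v = n/(l₁ + l₂ + 2d), attained on the limit cycle through (l₁+d, 0) and (0, l₂+d), and v = n/(l₁ + l₂ + n − 2d), attained on the limit cycle through (l₁, d) and (d, l₂). -/
open scoped Classical

namespace TwoContour

/-- A state of the two-contour system: the cells of the front particles
of cluster 1 and cluster 2. -/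
abbrev State (n : ℕ) := ZMod n × ZMod n

/-- Cell `c` is occupied by a cluster of length `l` whose front particle is at cell `α`:
the cluster occupies cells `α, α-1, …, α-(l-1)` (mod `n`). -/
def occ (n : ℕ) (α : ZMod n) (l : ℕ) (c : ZMod n) : Prop :=
  ∃ k : ℕ, k < l ∧ c = α - (k : ZMod n)

/-- Cluster 1 is delayed: its front stands at node 1 (cell 0 of contour 1) while
cluster 2 occupies node 1 (cells `d`, `d+1` of contour 2) or stands at node 1
(competition at node 1 is resolved in favor of cluster 2); or its front stands at
node 2 (cell `d` of contour 1) while cluster 2 occupies node 2 (cells 0, 1 of contour 2). -/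
def blocked1 (n l1 l2 d : ℕ) (s : State n) : Prop :=
  (s.1 = 0 ∧ ((occ n s.2 l2 (d : ZMod n) ∧ occ n s.2 l2 ((d : ZMod n) + 1)) ∨ s.2 = (d : ZMod n)))
  ∨ (s.1 = (d : ZMod n) ∧ occ n s.2 l2 0 ∧ occ n s.2 l2 1)

/-- Cluster 2 is delayed: its front stands at node 2 (cell 0 of contour 2) while
cluster 1 occupies node 2 (cells `d`, `d+1` of contour 1) or stands at node 2
(competition at node 2 is resolved in favor of cluster 1); or its front stands at
node 1 (cell `d` of contour 2) while cluster 1 occupies node 1 (cells 0, 1 of contour 1). -/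
def blocked2 (n l1 l2 d : ℕ) (s : State n) : Prop :=
  (s.2 = 0 ∧ ((occ n s.1 l1 (d : ZMod n) ∧ occ n s.1 l1 ((d : ZMod n) + 1)) ∨ s.1 = (d : ZMod n)))
  ∨ (s.2 = (d : ZMod n) ∧ occ n s.1 l1 0 ∧ occ n s.1 l1 1)

/-- One time step of the deterministic dynamics: each non-delayed cluster advances one cell. -/
noncomputable def step (n l1 l2 d : ℕ) (s : State n) : State n :=
  (if blocked1 n l1 l2 d s then s.1 else s.1 + 1,
   if blocked2 n l1 l2 d s then s.2 else s.2 + 1)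

/-- A state of free motion: from this state on, neither cluster is ever delayed. -/
def FreeState (n l1 l2 d : ℕ) (s : State n) : Prop :=
  ∀ t : ℕ, ¬ blocked1 n l1 l2 d ((step n l1 l2 d)^[t] s) ∧
           ¬ blocked2 n l1 l2 d ((step n l1 l2 d)^[t] s)

/-- A state of collapse: from this state on, no particle of either cluster ever moves. -/
def CollapseState (n l1 l2 d : ℕ) (s : State n) : Prop :=
  ∀ t : ℕ, blocked1 n l1 l2 d ((step n l1 l2 d)^[t] s) ∧
           blocked2 n l1 l2 d ((step n l1 l2 d)^[t] s)

/-- `s` lies on a limit cycle of period `T`. -/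
def Periodic (n l1 l2 d : ℕ) (s : State n) (T : ℕ) : Prop :=
  0 < T ∧ (step n l1 l2 d)^[T] s = s

/-- Number of moves of cluster 1 during the first `T` steps starting from `s`. -/
noncomputable def moves1 (n l1 l2 d : ℕ) (s : State n) (T : ℕ) : ℕ :=
  ((Finset.range T).filter (fun t => ¬ blocked1 n l1 l2 d ((step n l1 l2 d)^[t] s))).card

/-- Number of moves of cluster 2 during the first `T` steps starting from `s`. -/
noncomputable def moves2 (n l1 l2 d : ℕ) (s : State n) (T : ℕ) : ℕ :=
  ((Finset.range T).filter (fun t => ¬ blocked2 n l1 l2 d ((step n l1 l2 d)^[t] s))).card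

/-- An admissible state: the two clusters do not occupy the same node simultaneously. -/
def Admissible (n l1 l2 d : ℕ) (s : State n) : Prop :=
  ¬ (occ n s.1 l1 0 ∧ occ n s.1 l1 1 ∧
     occ n s.2 l2 (d : ZMod n) ∧ occ n s.2 l2 ((d : ZMod n) + 1)) ∧
  ¬ (occ n s.1 l1 (d : ZMod n) ∧ occ n s.1 l1 ((d : ZMod n) + 1) ∧
     occ n s.2 l2 0 ∧ occ n s.2 l2 1)



/-! ### Infrastructure -/

def Hyp (n l1 l2 d : ℕ) : Prop :=
  0 < n ∧ 0 < d ∧ 2*d ≤ n ∧ 0 < l1 ∧ l1 < n ∧ 0 < l2 ∧ l2 < n ∧ l1 ≤ l2 ∧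
  l1 ≤ d ∧ d < l2 ∧ l2 < 2*d ∧ l2 ≤ n - 2*d ∧ l1 + l2 > 2*d ∧ l1 + l2 > n - 2*d

/-- state from a pair of naturals -/
def Z (n : ℕ) (x y : ℕ) : State n := ((x : ZMod n), (y : ZMod n))

lemma modeq_iff {n x y : ℕ} (hn : 0 < n) (hx : x < 2*n) (hy : y < 2*n) :
    x ≡ y [MOD n] ↔ (x = y ∨ x = y + n ∨ y = x + n) := by
  unfold Nat.ModEq
  rcases Nat.lt_or_ge x n with h | h <;> rcases Nat.lt_or_ge y n with h' | h'
  · rw [Nat.mod_eq_of_lt h, Nat.mod_eq_of_lt h']; omega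
  · rw [Nat.mod_eq_of_lt h, Nat.mod_eq_sub_mod h', Nat.mod_eq_of_lt (by omega)]; omega
  · rw [Nat.mod_eq_sub_mod h, Nat.mod_eq_of_lt h', Nat.mod_eq_of_lt (by omega)]; omega
  · rw [Nat.mod_eq_sub_mod h, Nat.mod_eq_sub_mod h', Nat.mod_eq_of_lt (by omega),
      Nat.mod_eq_of_lt (by omega)]; omega

lemma natCast_eq_iff {n x y : ℕ} (hn : 0 < n) (hx : x < 2*n) (hy : y < 2*n) :
    ((x : ZMod n) = (y : ZMod n)) ↔ (x = y ∨ x = y + n ∨ y = x + n) := by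
  rw [ZMod.natCast_eq_natCast_iff, modeq_iff hn hx hy]

lemma Z_eq {n x y x' y' : ℕ} (hn : 0 < n) (hx : x < 2*n) (hy : y < 2*n)
    (hx' : x' < 2*n) (hy' : y' < 2*n)
    (h1 : x = x' ∨ x = x' + n ∨ x' = x + n) (h2 : y = y' ∨ y = y' + n ∨ y' = y + n) :
    Z n x y = Z n x' y' := by
  have e1 : (x : ZMod n) = (x' : ZMod n) := (natCast_eq_iff hn hx hx').mpr h1
  have e2 : (y : ZMod n) = (y' : ZMod n) := (natCast_eq_iff hn hy hy').mpr h2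
  simp [Z, e1, e2]

lemma occ_iff_modeq {n : ℕ} (l b cc : ℕ) :
    occ n (b : ZMod n) l (cc : ZMod n) ↔ ∃ k, k < l ∧ (cc + k) ≡ b [MOD n] := by
  unfold occ
  constructor
  · rintro ⟨k, hk, hc⟩
    refine ⟨k, hk, ?_⟩
    rw [← ZMod.natCast_eq_natCast_iff]; push_cast
    rw [hc]; ring
  · rintro ⟨k, hk, hc⟩
    refine ⟨k, hk, ?_⟩
    rw [← ZMod.natCast_eq_natCast_iff] at hc; push_cast at hc
    rw [← hc]; ring

lemma blocked1_val {n l1 l2 d : ℕ} (H : Hyp n l1 l2 d) {a b : ℕ} (ha : a ≤ n) (hb : b ≤ n) :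
    blocked1 n l1 l2 d (Z n a b) ↔
      ((a = 0 ∨ a = n) ∧ d ≤ b ∧ b < d + l2) ∨ (a = d ∧ 1 ≤ b ∧ b < l2) := by
  obtain ⟨hn, hd, h2d, hl1, hl1n, hl2, hl2n, h12, ha1, ha2, ha3, ha4, ha5, ha6⟩ := H
  unfold blocked1 Z
  dsimp only
  have e0 : ((a : ZMod n) = 0) ↔ (a = 0 ∨ a = n) := by
    rw [show (0 : ZMod n) = ((0:ℕ) : ZMod n) by simp, natCast_eq_iff hn (by omega) (by omega)]
    omega
  have ed : ((a : ZMod n) = (d : ZMod n)) ↔ a = d := by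
    rw [natCast_eq_iff hn (by omega) (by omega)]; omega
  have ebd : ((b : ZMod n) = (d : ZMod n)) ↔ b = d := by
    rw [natCast_eq_iff hn (by omega) (by omega)]; omega
  have hocc1 : occ n (b:ZMod n) l2 (d:ZMod n) ↔ (d ≤ b ∧ b < d + l2) := by
    rw [occ_iff_modeq]
    constructor
    · rintro ⟨k, hk, hc⟩; rw [modeq_iff hn (by omega) (by omega)] at hc; omega
    · intro h; exact ⟨b - d, by omega, by rw [modeq_iff hn (by omega) (by omega)]; omega⟩
  have hocc2 : occ n (b:ZMod n) l2 ((d:ZMod n)+1) ↔ (d+1 ≤ b ∧ b < d+1+l2) := by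
    rw [show ((d:ZMod n)+1) = ((d+1:ℕ):ZMod n) by push_cast; ring, occ_iff_modeq]
    constructor
    · rintro ⟨k, hk, hc⟩; rw [modeq_iff hn (by omega) (by omega)] at hc; omega
    · intro h; exact ⟨b - (d+1), by omega, by rw [modeq_iff hn (by omega) (by omega)]; omega⟩
  have hocc0 : occ n (b:ZMod n) l2 (0:ZMod n) ↔ (b < l2 ∨ b = n) := by
    rw [show (0 : ZMod n) = ((0:ℕ) : ZMod n) by simp, occ_iff_modeq]
    constructor
    · rintro ⟨k, hk, hc⟩; rw [modeq_iff hn (by omega) (by omega)] at hc; omega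
    · rintro (h | h)
      · exact ⟨b, by omega, by rw [modeq_iff hn (by omega) (by omega)]; omega⟩
      · exact ⟨0, by omega, by rw [modeq_iff hn (by omega) (by omega)]; omega⟩
  have hocc01 : occ n (b:ZMod n) l2 (1:ZMod n) ↔ (1 ≤ b ∧ b < 1 + l2) := by
    rw [show (1 : ZMod n) = ((1:ℕ) : ZMod n) by simp, occ_iff_modeq]
    constructor
    · rintro ⟨k, hk, hc⟩; rw [modeq_iff hn (by omega) (by omega)] at hc; omega
    · intro h; exact ⟨b - 1, by omega, by rw [modeq_iff hn (by omega) (by omega)]; omega⟩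
  rw [e0, ed, ebd, hocc1, hocc2, hocc0, hocc01]
  omega

lemma blocked2_val {n l1 l2 d : ℕ} (H : Hyp n l1 l2 d) {a b : ℕ} (ha : a ≤ n) (hb : b ≤ n) :
    blocked2 n l1 l2 d (Z n a b) ↔
      ((b = 0 ∨ b = n) ∧ d ≤ a ∧ a < d + l1) ∨ (b = d ∧ 1 ≤ a ∧ a < l1) := by
  obtain ⟨hn, hd, h2d, hl1, hl1n, hl2, hl2n, h12, ha1, ha2, ha3, ha4, ha5, ha6⟩ := H
  unfold blocked2 Z
  dsimp only
  have e0 : ((b : ZMod n) = 0) ↔ (b = 0 ∨ b = n) := by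
    rw [show (0 : ZMod n) = ((0:ℕ) : ZMod n) by simp, natCast_eq_iff hn (by omega) (by omega)]
    omega
  have ed : ((b : ZMod n) = (d : ZMod n)) ↔ b = d := by
    rw [natCast_eq_iff hn (by omega) (by omega)]; omega
  have ead : ((a : ZMod n) = (d : ZMod n)) ↔ a = d := by
    rw [natCast_eq_iff hn (by omega) (by omega)]; omega
  have hocc1 : occ n (a:ZMod n) l1 (d:ZMod n) ↔ (d ≤ a ∧ a < d + l1) := by
    rw [occ_iff_modeq]
    constructor
    · rintro ⟨k, hk, hc⟩; rw [modeq_iff hn (by omega) (by omega)] at hc; omega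
    · intro h; exact ⟨a - d, by omega, by rw [modeq_iff hn (by omega) (by omega)]; omega⟩
  have hocc2 : occ n (a:ZMod n) l1 ((d:ZMod n)+1) ↔ (d+1 ≤ a ∧ a < d+1+l1) := by
    rw [show ((d:ZMod n)+1) = ((d+1:ℕ):ZMod n) by push_cast; ring, occ_iff_modeq]
    constructor
    · rintro ⟨k, hk, hc⟩; rw [modeq_iff hn (by omega) (by omega)] at hc; omega
    · intro h; exact ⟨a - (d+1), by omega, by rw [modeq_iff hn (by omega) (by omega)]; omega⟩
  have hocc0 : occ n (a:ZMod n) l1 (0:ZMod n) ↔ (a < l1 ∨ a = n) := by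
    rw [show (0 : ZMod n) = ((0:ℕ) : ZMod n) by simp, occ_iff_modeq]
    constructor
    · rintro ⟨k, hk, hc⟩; rw [modeq_iff hn (by omega) (by omega)] at hc; omega
    · rintro (h | h)
      · exact ⟨a, by omega, by rw [modeq_iff hn (by omega) (by omega)]; omega⟩
      · exact ⟨0, by omega, by rw [modeq_iff hn (by omega) (by omega)]; omega⟩
  have hocc01 : occ n (a:ZMod n) l1 (1:ZMod n) ↔ (1 ≤ a ∧ a < 1 + l1) := by
    rw [show (1 : ZMod n) = ((1:ℕ) : ZMod n) by simp, occ_iff_modeq]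
    constructor
    · rintro ⟨k, hk, hc⟩; rw [modeq_iff hn (by omega) (by omega)] at hc; omega
    · intro h; exact ⟨a - 1, by omega, by rw [modeq_iff hn (by omega) (by omega)]; omega⟩
  rw [e0, ed, ead, hocc1, hocc2, hocc0, hocc01]
  omega

lemma step_both {n l1 l2 d x y : ℕ} (h1 : ¬ blocked1 n l1 l2 d (Z n x y))
    (h2 : ¬ blocked2 n l1 l2 d (Z n x y)) :
    step n l1 l2 d (Z n x y) = Z n (x+1) (y+1) := by
  unfold Z at h1 h2 ⊢
  simp only [step, if_neg h1, if_neg h2, Nat.cast_add, Nat.cast_one]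

lemma step_stall1 {n l1 l2 d x y : ℕ} (h1 : blocked1 n l1 l2 d (Z n x y))
    (h2 : ¬ blocked2 n l1 l2 d (Z n x y)) :
    step n l1 l2 d (Z n x y) = Z n x (y+1) := by
  unfold Z at h1 h2 ⊢
  simp only [step, if_pos h1, if_neg h2, Nat.cast_add, Nat.cast_one]

lemma step_stall2 {n l1 l2 d x y : ℕ} (h1 : ¬ blocked1 n l1 l2 d (Z n x y))
    (h2 : blocked2 n l1 l2 d (Z n x y)) :
    step n l1 l2 d (Z n x y) = Z n (x+1) y := by
  unfold Z at h1 h2 ⊢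
  simp only [step, if_neg h1, if_pos h2, Nat.cast_add, Nat.cast_one]

/-! ### The two limit cycles -/

def orbA (n l1 l2 d t : ℕ) : ℕ × ℕ :=
  if t ≤ n - l1 - d then (l1 + d + t, t)
  else if t ≤ l2 + d then (n, t)
  else if t ≤ n then (t - l2 - d, t)
  else (t - l2 - d, 0)

def orbB (n l1 l2 d t : ℕ) : ℕ × ℕ :=
  if t ≤ d - l1 then (l1 + t, d + t)
  else if t ≤ l2 - d then (d, d + t)
  else if t ≤ n - d then (t + 2*d - l2, d + t)
  else if t ≤ n + l2 - 2*d then (t + 2*d - l2, t + d - n)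
  else if t ≤ n then (t - (n + l2 - 2*d), t + d - n)
  else (t - (n + l2 - 2*d), d)

def ZP (n : ℕ) (p : ℕ × ℕ) : State n := Z n p.1 p.2

lemma ZP_mk (n x y : ℕ) : ZP n (x, y) = Z n x y := rfl

lemma orbA_step {n l1 l2 d : ℕ} (H : Hyp n l1 l2 d) {t : ℕ} (ht : t < l1+l2+2*d) :
    step n l1 l2 d (ZP n (orbA n l1 l2 d t)) = ZP n (orbA n l1 l2 d (t+1)) := by
  have H' := H
  obtain ⟨hn, hd, h2d, hl1, hl1n, hl2, hl2n, h12, ha1, ha2, ha3, ha4, ha5, ha6⟩ := H'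
  rcases (show (t + 1 ≤ n-l1-d) ∨ (t = n-l1-d) ∨ (n-l1-d < t ∧ t+1 ≤ l2+d) ∨ (t = l2+d)
      ∨ (l2+d < t ∧ t+1 ≤ n) ∨ (t = n) ∨ (n < t ∧ t+1 ≤ l1+l2+2*d) from by omega)
    with h | h | h | h | h | h | h
  · rw [show orbA n l1 l2 d t = (l1+d+t, t) by unfold orbA; rw [if_pos (by omega)],
      show orbA n l1 l2 d (t+1) = (l1+d+(t+1), t+1) by unfold orbA; rw [if_pos (by omega)],
      ZP_mk, ZP_mk]
    have hb1 : ¬ blocked1 n l1 l2 d (Z n (l1+d+t) t) := by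
      rw [blocked1_val H (by omega) (by omega)]; omega
    have hb2 : ¬ blocked2 n l1 l2 d (Z n (l1+d+t) t) := by
      rw [blocked2_val H (by omega) (by omega)]; omega
    rw [step_both hb1 hb2]
    exact Z_eq hn (by omega) (by omega) (by omega) (by omega) (by omega) (by omega)
  · rw [show orbA n l1 l2 d t = (l1+d+t, t) by unfold orbA; rw [if_pos (by omega)],
      show orbA n l1 l2 d (t+1) = (n, t+1) by
        unfold orbA; rw [if_neg (by omega), if_pos (by omega)],
      ZP_mk, ZP_mk]
    have hb1 : blocked1 n l1 l2 d (Z n (l1+d+t) t) := by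
      rw [blocked1_val H (by omega) (by omega)]; omega
    have hb2 : ¬ blocked2 n l1 l2 d (Z n (l1+d+t) t) := by
      rw [blocked2_val H (by omega) (by omega)]; omega
    rw [step_stall1 hb1 hb2]
    exact Z_eq hn (by omega) (by omega) (by omega) (by omega) (by omega) (by omega)
  · rw [show orbA n l1 l2 d t = (n, t) by
        unfold orbA; rw [if_neg (by omega), if_pos (by omega)],
      show orbA n l1 l2 d (t+1) = (n, t+1) by
        unfold orbA; rw [if_neg (by omega), if_pos (by omega)],
      ZP_mk, ZP_mk]
    have hb1 : blocked1 n l1 l2 d (Z n n t) := by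
      rw [blocked1_val H (by omega) (by omega)]; omega
    have hb2 : ¬ blocked2 n l1 l2 d (Z n n t) := by
      rw [blocked2_val H (by omega) (by omega)]; omega
    rw [step_stall1 hb1 hb2]
  · rw [show orbA n l1 l2 d t = (n, t) by
        unfold orbA; rw [if_neg (by omega), if_pos (by omega)],
      show orbA n l1 l2 d (t+1) = (t+1-l2-d, t+1) by
        unfold orbA; rw [if_neg (by omega), if_neg (by omega), if_pos (by omega)],
      ZP_mk, ZP_mk]
    have hb1 : ¬ blocked1 n l1 l2 d (Z n n t) := by
      rw [blocked1_val H (by omega) (by omega)]; omega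
    have hb2 : ¬ blocked2 n l1 l2 d (Z n n t) := by
      rw [blocked2_val H (by omega) (by omega)]; omega
    rw [step_both hb1 hb2]
    exact Z_eq hn (by omega) (by omega) (by omega) (by omega) (by omega) (by omega)
  · rw [show orbA n l1 l2 d t = (t-l2-d, t) by
        unfold orbA; rw [if_neg (by omega), if_neg (by omega), if_pos (by omega)],
      show orbA n l1 l2 d (t+1) = (t+1-l2-d, t+1) by
        unfold orbA; rw [if_neg (by omega), if_neg (by omega), if_pos (by omega)],
      ZP_mk, ZP_mk]
    have hb1 : ¬ blocked1 n l1 l2 d (Z n (t-l2-d) t) := by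
      rw [blocked1_val H (by omega) (by omega)]; omega
    have hb2 : ¬ blocked2 n l1 l2 d (Z n (t-l2-d) t) := by
      rw [blocked2_val H (by omega) (by omega)]; omega
    rw [step_both hb1 hb2]
    exact Z_eq hn (by omega) (by omega) (by omega) (by omega) (by omega) (by omega)
  · rw [show orbA n l1 l2 d t = (t-l2-d, t) by
        unfold orbA; rw [if_neg (by omega), if_neg (by omega), if_pos (by omega)],
      show orbA n l1 l2 d (t+1) = (t+1-l2-d, 0) by
        unfold orbA; rw [if_neg (by omega), if_neg (by omega), if_neg (by omega)],
      ZP_mk, ZP_mk]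
    have hb1 : ¬ blocked1 n l1 l2 d (Z n (t-l2-d) t) := by
      rw [blocked1_val H (by omega) (by omega)]; omega
    have hb2 : blocked2 n l1 l2 d (Z n (t-l2-d) t) := by
      rw [blocked2_val H (by omega) (by omega)]; omega
    rw [step_stall2 hb1 hb2]
    exact Z_eq hn (by omega) (by omega) (by omega) (by omega) (by omega) (by omega)
  · rw [show orbA n l1 l2 d t = (t-l2-d, 0) by
        unfold orbA; rw [if_neg (by omega), if_neg (by omega), if_neg (by omega)],
      show orbA n l1 l2 d (t+1) = (t+1-l2-d, 0) by
        unfold orbA; rw [if_neg (by omega), if_neg (by omega), if_neg (by omega)],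
      ZP_mk, ZP_mk]
    have hb1 : ¬ blocked1 n l1 l2 d (Z n (t-l2-d) 0) := by
      rw [blocked1_val H (by omega) (by omega)]; omega
    have hb2 : blocked2 n l1 l2 d (Z n (t-l2-d) 0) := by
      rw [blocked2_val H (by omega) (by omega)]; omega
    rw [step_stall2 hb1 hb2]
    exact Z_eq hn (by omega) (by omega) (by omega) (by omega) (by omega) (by omega)

lemma orbB_step {n l1 l2 d : ℕ} (H : Hyp n l1 l2 d) {t : ℕ} (ht : t < n + l1 + l2 - 2*d) :
    step n l1 l2 d (ZP n (orbB n l1 l2 d t)) = ZP n (orbB n l1 l2 d (t+1)) := by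
  have H' := H
  obtain ⟨hn, hd, h2d, hl1, hl1n, hl2, hl2n, h12, ha1, ha2, ha3, ha4, ha5, ha6⟩ := H'
  rcases (show (t + 1 ≤ d - l1) ∨ (t = d - l1) ∨ (d - l1 < t ∧ t + 1 ≤ l2 - d) ∨ (t = l2 - d) ∨ (l2 - d < t ∧ t + 1 ≤ n - d) ∨ (t = n - d) ∨ (n - d < t ∧ t + 1 ≤ n + l2 - 2*d) ∨ (t = n + l2 - 2*d) ∨ (n + l2 - 2*d < t ∧ t + 1 ≤ n) ∨ (t = n) ∨ (n < t ∧ t + 1 ≤ n + l1 + l2 - 2*d) from by omega)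
    with h0 | h1 | h2 | h3 | h4 | h5 | h6 | h7 | h8 | h9 | h10
  · rw [show orbB n l1 l2 d t = (l1+t, d+t) by unfold orbB; rw [if_pos (by omega)],
      show orbB n l1 l2 d (t+1) = (l1+(t+1), d+(t+1)) by unfold orbB; rw [if_pos (by omega)],
      ZP_mk, ZP_mk]
    have hb1 : ¬ blocked1 n l1 l2 d (Z n (l1+t) (d+t)) := by
      rw [blocked1_val H (by omega) (by omega)]; omega
    have hb2 : ¬ blocked2 n l1 l2 d (Z n (l1+t) (d+t)) := by
      rw [blocked2_val H (by omega) (by omega)]; omega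
    rw [step_both hb1 hb2]
    try exact Z_eq hn (by omega) (by omega) (by omega) (by omega) (by omega) (by omega)
  · rw [show orbB n l1 l2 d t = (l1+t, d+t) by unfold orbB; rw [if_pos (by omega)],
      show orbB n l1 l2 d (t+1) = (d, d+(t+1)) by unfold orbB; rw [if_neg (by omega), if_pos (by omega)],
      ZP_mk, ZP_mk]
    have hb1 : blocked1 n l1 l2 d (Z n (l1+t) (d+t)) := by
      rw [blocked1_val H (by omega) (by omega)]; omega
    have hb2 : ¬ blocked2 n l1 l2 d (Z n (l1+t) (d+t)) := by
      rw [blocked2_val H (by omega) (by omega)]; omega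
    rw [step_stall1 hb1 hb2]
    try exact Z_eq hn (by omega) (by omega) (by omega) (by omega) (by omega) (by omega)
  · rw [show orbB n l1 l2 d t = (d, d+t) by unfold orbB; rw [if_neg (by omega), if_pos (by omega)],
      show orbB n l1 l2 d (t+1) = (d, d+(t+1)) by unfold orbB; rw [if_neg (by omega), if_pos (by omega)],
      ZP_mk, ZP_mk]
    have hb1 : blocked1 n l1 l2 d (Z n (d) (d+t)) := by
      rw [blocked1_val H (by omega) (by omega)]; omega
    have hb2 : ¬ blocked2 n l1 l2 d (Z n (d) (d+t)) := by
      rw [blocked2_val H (by omega) (by omega)]; omega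
    rw [step_stall1 hb1 hb2]
    try exact Z_eq hn (by omega) (by omega) (by omega) (by omega) (by omega) (by omega)
  · rw [show orbB n l1 l2 d t = (d, d+t) by unfold orbB; rw [if_neg (by omega), if_pos (by omega)],
      show orbB n l1 l2 d (t+1) = ((t+1)+2*d-l2, d+(t+1)) by unfold orbB; rw [if_neg (by omega), if_neg (by omega), if_pos (by omega)],
      ZP_mk, ZP_mk]
    have hb1 : ¬ blocked1 n l1 l2 d (Z n (d) (d+t)) := by
      rw [blocked1_val H (by omega) (by omega)]; omega
    have hb2 : ¬ blocked2 n l1 l2 d (Z n (d) (d+t)) := by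
      rw [blocked2_val H (by omega) (by omega)]; omega
    rw [step_both hb1 hb2]
    try exact Z_eq hn (by omega) (by omega) (by omega) (by omega) (by omega) (by omega)
  · rw [show orbB n l1 l2 d t = (t+2*d-l2, d+t) by unfold orbB; rw [if_neg (by omega), if_neg (by omega), if_pos (by omega)],
      show orbB n l1 l2 d (t+1) = ((t+1)+2*d-l2, d+(t+1)) by unfold orbB; rw [if_neg (by omega), if_neg (by omega), if_pos (by omega)],
      ZP_mk, ZP_mk]
    have hb1 : ¬ blocked1 n l1 l2 d (Z n (t+2*d-l2) (d+t)) := by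
      rw [blocked1_val H (by omega) (by omega)]; omega
    have hb2 : ¬ blocked2 n l1 l2 d (Z n (t+2*d-l2) (d+t)) := by
      rw [blocked2_val H (by omega) (by omega)]; omega
    rw [step_both hb1 hb2]
    try exact Z_eq hn (by omega) (by omega) (by omega) (by omega) (by omega) (by omega)
  · rw [show orbB n l1 l2 d t = (t+2*d-l2, d+t) by unfold orbB; rw [if_neg (by omega), if_neg (by omega), if_pos (by omega)],
      show orbB n l1 l2 d (t+1) = ((t+1)+2*d-l2, (t+1)+d-n) by unfold orbB; rw [if_neg (by omega), if_neg (by omega), if_neg (by omega), if_pos (by omega)],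
      ZP_mk, ZP_mk]
    have hb1 : ¬ blocked1 n l1 l2 d (Z n (t+2*d-l2) (d+t)) := by
      rw [blocked1_val H (by omega) (by omega)]; omega
    have hb2 : ¬ blocked2 n l1 l2 d (Z n (t+2*d-l2) (d+t)) := by
      rw [blocked2_val H (by omega) (by omega)]; omega
    rw [step_both hb1 hb2]
    try exact Z_eq hn (by omega) (by omega) (by omega) (by omega) (by omega) (by omega)
  · rw [show orbB n l1 l2 d t = (t+2*d-l2, t+d-n) by unfold orbB; rw [if_neg (by omega), if_neg (by omega), if_neg (by omega), if_pos (by omega)],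
      show orbB n l1 l2 d (t+1) = ((t+1)+2*d-l2, (t+1)+d-n) by unfold orbB; rw [if_neg (by omega), if_neg (by omega), if_neg (by omega), if_pos (by omega)],
      ZP_mk, ZP_mk]
    have hb1 : ¬ blocked1 n l1 l2 d (Z n (t+2*d-l2) (t+d-n)) := by
      rw [blocked1_val H (by omega) (by omega)]; omega
    have hb2 : ¬ blocked2 n l1 l2 d (Z n (t+2*d-l2) (t+d-n)) := by
      rw [blocked2_val H (by omega) (by omega)]; omega
    rw [step_both hb1 hb2]
    try exact Z_eq hn (by omega) (by omega) (by omega) (by omega) (by omega) (by omega)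
  · rw [show orbB n l1 l2 d t = (t+2*d-l2, t+d-n) by unfold orbB; rw [if_neg (by omega), if_neg (by omega), if_neg (by omega), if_pos (by omega)],
      show orbB n l1 l2 d (t+1) = ((t+1)-(n+l2-2*d), (t+1)+d-n) by unfold orbB; rw [if_neg (by omega), if_neg (by omega), if_neg (by omega), if_neg (by omega), if_pos (by omega)],
      ZP_mk, ZP_mk]
    have hb1 : ¬ blocked1 n l1 l2 d (Z n (t+2*d-l2) (t+d-n)) := by
      rw [blocked1_val H (by omega) (by omega)]; omega
    have hb2 : ¬ blocked2 n l1 l2 d (Z n (t+2*d-l2) (t+d-n)) := by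
      rw [blocked2_val H (by omega) (by omega)]; omega
    rw [step_both hb1 hb2]
    try exact Z_eq hn (by omega) (by omega) (by omega) (by omega) (by omega) (by omega)
  · rw [show orbB n l1 l2 d t = (t-(n+l2-2*d), t+d-n) by unfold orbB; rw [if_neg (by omega), if_neg (by omega), if_neg (by omega), if_neg (by omega), if_pos (by omega)],
      show orbB n l1 l2 d (t+1) = ((t+1)-(n+l2-2*d), (t+1)+d-n) by unfold orbB; rw [if_neg (by omega), if_neg (by omega), if_neg (by omega), if_neg (by omega), if_pos (by omega)],
      ZP_mk, ZP_mk]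
    have hb1 : ¬ blocked1 n l1 l2 d (Z n (t-(n+l2-2*d)) (t+d-n)) := by
      rw [blocked1_val H (by omega) (by omega)]; omega
    have hb2 : ¬ blocked2 n l1 l2 d (Z n (t-(n+l2-2*d)) (t+d-n)) := by
      rw [blocked2_val H (by omega) (by omega)]; omega
    rw [step_both hb1 hb2]
    try exact Z_eq hn (by omega) (by omega) (by omega) (by omega) (by omega) (by omega)
  · rw [show orbB n l1 l2 d t = (t-(n+l2-2*d), t+d-n) by unfold orbB; rw [if_neg (by omega), if_neg (by omega), if_neg (by omega), if_neg (by omega), if_pos (by omega)],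
      show orbB n l1 l2 d (t+1) = ((t+1)-(n+l2-2*d), d) by unfold orbB; rw [if_neg (by omega), if_neg (by omega), if_neg (by omega), if_neg (by omega), if_neg (by omega)],
      ZP_mk, ZP_mk]
    have hb1 : ¬ blocked1 n l1 l2 d (Z n (t-(n+l2-2*d)) (t+d-n)) := by
      rw [blocked1_val H (by omega) (by omega)]; omega
    have hb2 : blocked2 n l1 l2 d (Z n (t-(n+l2-2*d)) (t+d-n)) := by
      rw [blocked2_val H (by omega) (by omega)]; omega
    rw [step_stall2 hb1 hb2]
    try exact Z_eq hn (by omega) (by omega) (by omega) (by omega) (by omega) (by omega)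
  · rw [show orbB n l1 l2 d t = (t-(n+l2-2*d), d) by unfold orbB; rw [if_neg (by omega), if_neg (by omega), if_neg (by omega), if_neg (by omega), if_neg (by omega)],
      show orbB n l1 l2 d (t+1) = ((t+1)-(n+l2-2*d), d) by unfold orbB; rw [if_neg (by omega), if_neg (by omega), if_neg (by omega), if_neg (by omega), if_neg (by omega)],
      ZP_mk, ZP_mk]
    have hb1 : ¬ blocked1 n l1 l2 d (Z n (t-(n+l2-2*d)) (d)) := by
      rw [blocked1_val H (by omega) (by omega)]; omega
    have hb2 : blocked2 n l1 l2 d (Z n (t-(n+l2-2*d)) (d)) := by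
      rw [blocked2_val H (by omega) (by omega)]; omega
    rw [step_stall2 hb1 hb2]
    try exact Z_eq hn (by omega) (by omega) (by omega) (by omega) (by omega) (by omega)

/-! ### Chains, fixed points, moves -/

lemma orbA_wrap {n l1 l2 d : ℕ} (H : Hyp n l1 l2 d) :
    orbA n l1 l2 d (l1+l2+2*d) = orbA n l1 l2 d 0 := by
  obtain ⟨hn, hd, h2d, hl1, hl1n, hl2, hl2n, h12, ha1, ha2, ha3, ha4, ha5, ha6⟩ := H
  unfold orbA
  rw [if_neg (by omega), if_neg (by omega), if_neg (by omega), if_pos (by omega)]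
  rw [Prod.ext_iff]
  constructor <;> omega

lemma orbB_wrap {n l1 l2 d : ℕ} (H : Hyp n l1 l2 d) :
    orbB n l1 l2 d (n+l1+l2-2*d) = orbB n l1 l2 d 0 := by
  obtain ⟨hn, hd, h2d, hl1, hl1n, hl2, hl2n, h12, ha1, ha2, ha3, ha4, ha5, ha6⟩ := H
  unfold orbB
  rw [if_neg (by omega), if_neg (by omega), if_neg (by omega), if_neg (by omega),
    if_neg (by omega), if_pos (by omega)]
  rw [Prod.ext_iff]
  constructor <;> omega

lemma orbA_chain {n l1 l2 d : ℕ} (H : Hyp n l1 l2 d) :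
    ∀ (j t : ℕ), t + j ≤ l1+l2+2*d →
      (step n l1 l2 d)^[j] (ZP n (orbA n l1 l2 d t)) = ZP n (orbA n l1 l2 d (t+j)) := by
  intro j
  induction j with
  | zero => intro t _; simp
  | succ j ih =>
    intro t h
    rw [Function.iterate_succ_apply, orbA_step H (by omega),
      show t + (j+1) = (t+1) + j by omega]
    exact ih (t+1) (by omega)

lemma orbB_chain {n l1 l2 d : ℕ} (H : Hyp n l1 l2 d) :
    ∀ (j t : ℕ), t + j ≤ n+l1+l2-2*d →
      (step n l1 l2 d)^[j] (ZP n (orbB n l1 l2 d t)) = ZP n (orbB n l1 l2 d (t+j)) := by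
  intro j
  induction j with
  | zero => intro t _; simp
  | succ j ih =>
    intro t h
    have hd2 : (2:ℕ)*d ≤ n := H.2.2.1
    rw [Function.iterate_succ_apply, orbB_step H (by omega),
      show t + (j+1) = (t+1) + j by omega]
    exact ih (t+1) (by omega)

def inA (n l1 l2 d : ℕ) (s : State n) : Prop :=
  ∃ t, t < l1+l2+2*d ∧ s = ZP n (orbA n l1 l2 d t)

def inB (n l1 l2 d : ℕ) (s : State n) : Prop :=
  ∃ t, t < n+l1+l2-2*d ∧ s = ZP n (orbB n l1 l2 d t)

lemma inA_step {n l1 l2 d : ℕ} (H : Hyp n l1 l2 d) {s : State n} (hs : inA n l1 l2 d s) :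
    inA n l1 l2 d (step n l1 l2 d s) := by
  obtain ⟨t, ht, rfl⟩ := hs
  rw [orbA_step H ht]
  rcases eq_or_lt_of_le (show t + 1 ≤ l1+l2+2*d from ht) with h | h
  · exact ⟨0, by have := H.1; have := H.2.1; omega, by rw [h, orbA_wrap H]⟩
  · exact ⟨t+1, h, rfl⟩

lemma inB_step {n l1 l2 d : ℕ} (H : Hyp n l1 l2 d) {s : State n} (hs : inB n l1 l2 d s) :
    inB n l1 l2 d (step n l1 l2 d s) := by
  obtain ⟨t, ht, rfl⟩ := hs
  rw [orbB_step H ht]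
  rcases eq_or_lt_of_le (show t + 1 ≤ n+l1+l2-2*d from ht) with h | h
  · refine ⟨0, ?_, by rw [h, orbB_wrap H]⟩
    obtain ⟨hn, hd, h2d, hl1, hl1n, hl2, hl2n, h12, ha1, ha2, ha3, ha4, ha5, ha6⟩ := H
    omega
  · exact ⟨t+1, h, rfl⟩

lemma inA_fix {n l1 l2 d : ℕ} (H : Hyp n l1 l2 d) {s : State n} (hs : inA n l1 l2 d s) :
    (step n l1 l2 d)^[l1+l2+2*d] s = s := by
  obtain ⟨t, ht, rfl⟩ := hs
  have h1 : (step n l1 l2 d)^[l1+l2+2*d - t] (ZP n (orbA n l1 l2 d t))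
      = ZP n (orbA n l1 l2 d 0) := by
    rw [orbA_chain H _ t (by omega), show t + (l1+l2+2*d-t) = l1+l2+2*d by omega, orbA_wrap H]
  have h2 : (step n l1 l2 d)^[t] (ZP n (orbA n l1 l2 d 0)) = ZP n (orbA n l1 l2 d t) := by
    rw [orbA_chain H _ 0 (by omega), Nat.zero_add]
  calc (step n l1 l2 d)^[l1+l2+2*d] (ZP n (orbA n l1 l2 d t))
      = (step n l1 l2 d)^[t + (l1+l2+2*d - t)] (ZP n (orbA n l1 l2 d t)) := by
        congr 1; omega
    _ = (step n l1 l2 d)^[t] ((step n l1 l2 d)^[l1+l2+2*d - t] (ZP n (orbA n l1 l2 d t))) :=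
        Function.iterate_add_apply _ _ _ _
    _ = ZP n (orbA n l1 l2 d t) := by rw [h1, h2]

lemma inB_fix {n l1 l2 d : ℕ} (H : Hyp n l1 l2 d) {s : State n} (hs : inB n l1 l2 d s) :
    (step n l1 l2 d)^[n+l1+l2-2*d] s = s := by
  obtain ⟨t, ht, rfl⟩ := hs
  have h1 : (step n l1 l2 d)^[n+l1+l2-2*d - t] (ZP n (orbB n l1 l2 d t))
      = ZP n (orbB n l1 l2 d 0) := by
    rw [orbB_chain H _ t (by omega), show t + (n+l1+l2-2*d-t) = n+l1+l2-2*d by omega,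
      orbB_wrap H]
  have h2 : (step n l1 l2 d)^[t] (ZP n (orbB n l1 l2 d 0)) = ZP n (orbB n l1 l2 d t) := by
    rw [orbB_chain H _ 0 (by omega), Nat.zero_add]
  calc (step n l1 l2 d)^[n+l1+l2-2*d] (ZP n (orbB n l1 l2 d t))
      = (step n l1 l2 d)^[t + (n+l1+l2-2*d - t)] (ZP n (orbB n l1 l2 d t)) := by
        congr 1; omega
    _ = (step n l1 l2 d)^[t] ((step n l1 l2 d)^[n+l1+l2-2*d - t] (ZP n (orbB n l1 l2 d t))) :=
        Function.iterate_add_apply _ _ _ _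
    _ = ZP n (orbB n l1 l2 d t) := by rw [h1, h2]

/-! ### moves counting -/

lemma moves1_zero (n l1 l2 d : ℕ) (s : State n) : moves1 n l1 l2 d s 0 = 0 := by
  simp [moves1]

lemma moves2_zero (n l1 l2 d : ℕ) (s : State n) : moves2 n l1 l2 d s 0 = 0 := by
  simp [moves2]

lemma moves1_succ (n l1 l2 d : ℕ) (s : State n) (t : ℕ) :
    moves1 n l1 l2 d s (t+1) = moves1 n l1 l2 d s t +
      (if blocked1 n l1 l2 d ((step n l1 l2 d)^[t] s) then 0 else 1) := by
  unfold moves1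
  rw [Finset.range_add_one, Finset.filter_insert]
  by_cases hb : blocked1 n l1 l2 d ((step n l1 l2 d)^[t] s)
  · rw [if_neg (by simp [hb]), if_pos hb, Nat.add_zero]
  · rw [if_pos (by simp [hb]), if_neg hb,
      Finset.card_insert_of_notMem (by simp), Nat.add_comm]

lemma moves2_succ (n l1 l2 d : ℕ) (s : State n) (t : ℕ) :
    moves2 n l1 l2 d s (t+1) = moves2 n l1 l2 d s t +
      (if blocked2 n l1 l2 d ((step n l1 l2 d)^[t] s) then 0 else 1) := by
  unfold moves2
  rw [Finset.range_add_one, Finset.filter_insert]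
  by_cases hb : blocked2 n l1 l2 d ((step n l1 l2 d)^[t] s)
  · rw [if_neg (by simp [hb]), if_pos hb, Nat.add_zero]
  · rw [if_pos (by simp [hb]), if_neg hb,
      Finset.card_insert_of_notMem (by simp), Nat.add_comm]

lemma disp1 (n l1 l2 d : ℕ) (s : State n) :
    ∀ t, ((step n l1 l2 d)^[t] s).1 = s.1 + (moves1 n l1 l2 d s t : ZMod n) := by
  intro t
  induction t with
  | zero => simp [moves1_zero]
  | succ t ih =>
    rw [Function.iterate_succ_apply', moves1_succ]
    by_cases hb : blocked1 n l1 l2 d ((step n l1 l2 d)^[t] s)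
    · rw [if_pos hb]
      show (if blocked1 n l1 l2 d _ then _ else _) = _
      rw [if_pos hb, ih]; push_cast; ring
    · rw [if_neg hb]
      show (if blocked1 n l1 l2 d _ then _ else _) = _
      rw [if_neg hb, ih]; push_cast; ring

lemma disp2 (n l1 l2 d : ℕ) (s : State n) :
    ∀ t, ((step n l1 l2 d)^[t] s).2 = s.2 + (moves2 n l1 l2 d s t : ZMod n) := by
  intro t
  induction t with
  | zero => simp [moves2_zero]
  | succ t ih =>
    rw [Function.iterate_succ_apply', moves2_succ]
    by_cases hb : blocked2 n l1 l2 d ((step n l1 l2 d)^[t] s)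
    · rw [if_pos hb]
      show (if blocked2 n l1 l2 d _ then _ else _) = _
      rw [if_pos hb, ih]; push_cast; ring
    · rw [if_neg hb]
      show (if blocked2 n l1 l2 d _ then _ else _) = _
      rw [if_neg hb, ih]; push_cast; ring

lemma moves1_add (n l1 l2 d : ℕ) (s : State n) (x : ℕ) :
    ∀ y, moves1 n l1 l2 d s (x + y) =
      moves1 n l1 l2 d s x + moves1 n l1 l2 d ((step n l1 l2 d)^[x] s) y := by
  intro y
  induction y with
  | zero => simp [moves1_zero]
  | succ y ih =>
    rw [show x + (y+1) = (x+y)+1 by omega, moves1_succ, ih, moves1_succ,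
      Nat.add_comm x y, Function.iterate_add_apply, Nat.add_assoc]

lemma moves2_add (n l1 l2 d : ℕ) (s : State n) (x : ℕ) :
    ∀ y, moves2 n l1 l2 d s (x + y) =
      moves2 n l1 l2 d s x + moves2 n l1 l2 d ((step n l1 l2 d)^[x] s) y := by
  intro y
  induction y with
  | zero => simp [moves2_zero]
  | succ y ih =>
    rw [show x + (y+1) = (x+y)+1 by omega, moves2_succ, ih, moves2_succ,
      Nat.add_comm x y, Function.iterate_add_apply, Nat.add_assoc]

lemma moves1_mul (n l1 l2 d : ℕ) {s : State n} {P : ℕ}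
    (hfix : (step n l1 l2 d)^[P] s = s) :
    ∀ k, moves1 n l1 l2 d s (k * P) = k * moves1 n l1 l2 d s P := by
  intro k
  induction k with
  | zero => simp [moves1_zero]
  | succ k ih =>
    have hfixk : (step n l1 l2 d)^[k * P] s = s := by
      rw [mul_comm, Function.iterate_mul]
      exact Function.iterate_fixed hfix k
    rw [show (k+1) * P = k * P + P by ring, moves1_add, hfixk, ih]
    ring

lemma moves2_mul (n l1 l2 d : ℕ) {s : State n} {P : ℕ}
    (hfix : (step n l1 l2 d)^[P] s = s) :
    ∀ k, moves2 n l1 l2 d s (k * P) = k * moves2 n l1 l2 d s P := by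
  intro k
  induction k with
  | zero => simp [moves2_zero]
  | succ k ih =>
    have hfixk : (step n l1 l2 d)^[k * P] s = s := by
      rw [mul_comm, Function.iterate_mul]
      exact Function.iterate_fixed hfix k
    rw [show (k+1) * P = k * P + P by ring, moves2_add, hfixk, ih]
    ring

lemma moves1_le (n l1 l2 d : ℕ) (s : State n) (T : ℕ) : moves1 n l1 l2 d s T ≤ T := by
  calc moves1 n l1 l2 d s T ≤ (Finset.range T).card := Finset.card_filter_le _ _
    _ = T := Finset.card_range T

lemma moves2_le (n l1 l2 d : ℕ) (s : State n) (T : ℕ) : moves2 n l1 l2 d s T ≤ T := by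
  calc moves2 n l1 l2 d s T ≤ (Finset.range T).card := Finset.card_filter_le _ _
    _ = T := Finset.card_range T

lemma moves1_dvd (n l1 l2 d : ℕ) (hn : 0 < n) {s : State n} {T : ℕ}
    (hfix : (step n l1 l2 d)^[T] s = s) : n ∣ moves1 n l1 l2 d s T := by
  haveI : NeZero n := ⟨hn.ne'⟩
  have h := disp1 n l1 l2 d s T
  rw [hfix] at h
  have : (moves1 n l1 l2 d s T : ZMod n) = 0 := by
    have := h.symm
    rwa [add_eq_left] at this
  exact (ZMod.natCast_eq_zero_iff _ _).mp this

lemma moves2_dvd (n l1 l2 d : ℕ) (hn : 0 < n) {s : State n} {T : ℕ}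
    (hfix : (step n l1 l2 d)^[T] s = s) : n ∣ moves2 n l1 l2 d s T := by
  haveI : NeZero n := ⟨hn.ne'⟩
  have h := disp2 n l1 l2 d s T
  rw [hfix] at h
  have : (moves2 n l1 l2 d s T : ZMod n) = 0 := by
    have := h.symm
    rwa [add_eq_left] at this
  exact (ZMod.natCast_eq_zero_iff _ _).mp this

lemma moves1_pos (n l1 l2 d : ℕ) {s : State n} {T t : ℕ} (ht : t < T)
    (hb : ¬ blocked1 n l1 l2 d ((step n l1 l2 d)^[t] s)) : 0 < moves1 n l1 l2 d s T := by
  unfold moves1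
  rw [Finset.card_pos]
  exact ⟨t, Finset.mem_filter.mpr ⟨Finset.mem_range.mpr ht, hb⟩⟩

lemma moves2_pos (n l1 l2 d : ℕ) {s : State n} {T t : ℕ} (ht : t < T)
    (hb : ¬ blocked2 n l1 l2 d ((step n l1 l2 d)^[t] s)) : 0 < moves2 n l1 l2 d s T := by
  unfold moves2
  rw [Finset.card_pos]
  exact ⟨t, Finset.mem_filter.mpr ⟨Finset.mem_range.mpr ht, hb⟩⟩

lemma dvd_eq_n {n m P : ℕ} (hn : 0 < n) (hdvd : n ∣ m) (hpos : 0 < m) (hle : m ≤ P)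
    (hP : P < 2*n) : m = n := by
  obtain ⟨k, rfl⟩ := hdvd
  rcases k with _ | k
  · simp at hpos
  · rcases k with _ | k
    · simp
    · exfalso
      have h2 : n * (k+1+1) = n*k + n + n := by ring
      omega

/-! ### moves over one cycle period equal n -/

lemma notblocked_A0 {n l1 l2 d : ℕ} (H : Hyp n l1 l2 d) :
    ¬ blocked1 n l1 l2 d (ZP n (orbA n l1 l2 d 0)) ∧
    ¬ blocked2 n l1 l2 d (ZP n (orbA n l1 l2 d 0)) := by
  have H' := H
  obtain ⟨hn, hd, h2d, hl1, hl1n, hl2, hl2n, h12, ha1, ha2, ha3, ha4, ha5, ha6⟩ := H'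
  rw [show orbA n l1 l2 d 0 = (l1+d+0, 0) by unfold orbA; rw [if_pos (by omega)], ZP_mk]
  constructor
  · rw [blocked1_val H (by omega) (by omega)]; omega
  · rw [blocked2_val H (by omega) (by omega)]; omega

lemma notblocked_Bw {n l1 l2 d : ℕ} (H : Hyp n l1 l2 d) :
    ¬ blocked1 n l1 l2 d (ZP n (orbB n l1 l2 d (l2-d))) ∧
    ¬ blocked2 n l1 l2 d (ZP n (orbB n l1 l2 d (l2-d))) := by
  have H' := H
  obtain ⟨hn, hd, h2d, hl1, hl1n, hl2, hl2n, h12, ha1, ha2, ha3, ha4, ha5, ha6⟩ := H'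
  rw [show orbB n l1 l2 d (l2-d) = (d, d+(l2-d)) by
    unfold orbB; rw [if_neg (by omega), if_pos (by omega)], ZP_mk]
  constructor
  · rw [blocked1_val H (by omega) (by omega)]; omega
  · rw [blocked2_val H (by omega) (by omega)]; omega

lemma inA_reach0 {n l1 l2 d : ℕ} (H : Hyp n l1 l2 d) {s : State n} (hs : inA n l1 l2 d s) :
    ∃ t, t < l1+l2+2*d ∧
      (step n l1 l2 d)^[t] s = ZP n (orbA n l1 l2 d 0) := by
  have H' := H
  obtain ⟨hn, hd, h2d, hl1, hl1n, hl2, hl2n, h12, ha1, ha2, ha3, ha4, ha5, ha6⟩ := H'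
  obtain ⟨t0, ht0, rfl⟩ := hs
  rcases Nat.eq_zero_or_pos t0 with h0 | h0
  · exact ⟨0, by omega, by subst h0; simp⟩
  · refine ⟨l1+l2+2*d - t0, by omega, ?_⟩
    rw [orbA_chain H _ t0 (by omega), show t0 + (l1+l2+2*d - t0) = l1+l2+2*d by omega,
      orbA_wrap H]

lemma inB_reachW {n l1 l2 d : ℕ} (H : Hyp n l1 l2 d) {s : State n} (hs : inB n l1 l2 d s) :
    ∃ t, t < n+l1+l2-2*d ∧
      (step n l1 l2 d)^[t] s = ZP n (orbB n l1 l2 d (l2-d)) := by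
  have H' := H
  obtain ⟨hn, hd, h2d, hl1, hl1n, hl2, hl2n, h12, ha1, ha2, ha3, ha4, ha5, ha6⟩ := H'
  obtain ⟨t0, ht0, rfl⟩ := hs
  rcases le_or_gt t0 (l2-d) with h0 | h0
  · refine ⟨l2-d - t0, by omega, ?_⟩
    rw [orbB_chain H _ t0 (by omega), show t0 + (l2-d - t0) = l2-d by omega]
  · refine ⟨(l2-d) + (n+l1+l2-2*d - t0), by omega, ?_⟩
    rw [Function.iterate_add_apply, orbB_chain H _ t0 (by omega),
      show t0 + (n+l1+l2-2*d - t0) = n+l1+l2-2*d by omega, orbB_wrap H,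
      orbB_chain H _ 0 (by omega), Nat.zero_add]

lemma inA_moves1 {n l1 l2 d : ℕ} (H : Hyp n l1 l2 d) {s : State n} (hs : inA n l1 l2 d s) :
    moves1 n l1 l2 d s (l1+l2+2*d) = n := by
  have H' := H
  obtain ⟨hn, hd, h2d, hl1, hl1n, hl2, hl2n, h12, ha1, ha2, ha3, ha4, ha5, ha6⟩ := H'
  obtain ⟨t, ht, hr⟩ := inA_reach0 H hs
  refine dvd_eq_n hn (moves1_dvd n l1 l2 d hn (inA_fix H hs)) ?_ (moves1_le n l1 l2 d s _)
    (by omega)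
  exact moves1_pos n l1 l2 d ht (by rw [hr]; exact (notblocked_A0 H).1)

lemma inA_moves2 {n l1 l2 d : ℕ} (H : Hyp n l1 l2 d) {s : State n} (hs : inA n l1 l2 d s) :
    moves2 n l1 l2 d s (l1+l2+2*d) = n := by
  have H' := H
  obtain ⟨hn, hd, h2d, hl1, hl1n, hl2, hl2n, h12, ha1, ha2, ha3, ha4, ha5, ha6⟩ := H'
  obtain ⟨t, ht, hr⟩ := inA_reach0 H hs
  refine dvd_eq_n hn (moves2_dvd n l1 l2 d hn (inA_fix H hs)) ?_ (moves2_le n l1 l2 d s _)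
    (by omega)
  exact moves2_pos n l1 l2 d ht (by rw [hr]; exact (notblocked_A0 H).2)

lemma inB_moves1 {n l1 l2 d : ℕ} (H : Hyp n l1 l2 d) {s : State n} (hs : inB n l1 l2 d s) :
    moves1 n l1 l2 d s (n+l1+l2-2*d) = n := by
  have H' := H
  obtain ⟨hn, hd, h2d, hl1, hl1n, hl2, hl2n, h12, ha1, ha2, ha3, ha4, ha5, ha6⟩ := H'
  obtain ⟨t, ht, hr⟩ := inB_reachW H hs
  refine dvd_eq_n hn (moves1_dvd n l1 l2 d hn (inB_fix H hs)) ?_ (moves1_le n l1 l2 d s _)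
    (by omega)
  exact moves1_pos n l1 l2 d ht (by rw [hr]; exact (notblocked_Bw H).1)

lemma inB_moves2 {n l1 l2 d : ℕ} (H : Hyp n l1 l2 d) {s : State n} (hs : inB n l1 l2 d s) :
    moves2 n l1 l2 d s (n+l1+l2-2*d) = n := by
  have H' := H
  obtain ⟨hn, hd, h2d, hl1, hl1n, hl2, hl2n, h12, ha1, ha2, ha3, ha4, ha5, ha6⟩ := H'
  obtain ⟨t, ht, hr⟩ := inB_reachW H hs
  refine dvd_eq_n hn (moves2_dvd n l1 l2 d hn (inB_fix H hs)) ?_ (moves2_le n l1 l2 d s _)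
    (by omega)
  exact moves2_pos n l1 l2 d ht (by rw [hr]; exact (notblocked_Bw H).2)

/-! ### periodic-orbit helpers -/

lemma state_eq_Z {n : ℕ} (hn : 0 < n) (s : State n) : s = Z n s.1.val s.2.val := by
  haveI : NeZero n := ⟨hn.ne'⟩
  unfold Z
  rw [ZMod.natCast_zmod_val, ZMod.natCast_zmod_val]

lemma iter_reduce {α : Type*} {f : α → α} {s : α} {T : ℕ} (hT : 0 < T)
    (hfix : f^[T] s = s) : ∀ t, ∃ t', t' < T ∧ f^[t'] s = f^[t] s := by
  intro t
  induction t using Nat.strong_induction_on with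
  | _ t ih =>
    rcases Nat.lt_or_ge t T with h | h
    · exact ⟨t, h, rfl⟩
    · obtain ⟨t', ht', he⟩ := ih (t - T) (by omega)
      refine ⟨t', ht', ?_⟩
      rw [show t = (t - T) + T by omega, Function.iterate_add_apply, hfix]
      exact he

lemma hit_value {g : ℕ → ℕ} (h0 : g 0 = 0) (hstep : ∀ t, g (t+1) ≤ g t + 1) :
    ∀ T v, v ≤ g T → ∃ t, t ≤ T ∧ g t = v := by
  intro T
  induction T with
  | zero => intro v hv; exact ⟨0, le_refl 0, by omega⟩
  | succ T ih =>
    intro v hv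
    by_cases hv' : v ≤ g T
    · obtain ⟨t, ht, h⟩ := ih v hv'
      exact ⟨t, by omega, h⟩
    · exact ⟨T+1, le_refl _, by have := hstep T; omega⟩

/-! ### a periodic orbit cannot have a forever-blocked cluster 2 -/

lemma moves2_periodic_pos {n l1 l2 d : ℕ} (H : Hyp n l1 l2 d) {s : State n} {T : ℕ}
    (hT : 0 < T) (hfix : (step n l1 l2 d)^[T] s = s) : 0 < moves2 n l1 l2 d s T := by
  have H' := H
  obtain ⟨hn, hd, h2d, hl1, hl1n, hl2, hl2n, h12, ha1, ha2, ha3, ha4, ha5, ha6⟩ := H'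
  haveI : NeZero n := ⟨hn.ne'⟩
  by_contra hpos
  have hm0 : moves2 n l1 l2 d s T = 0 := by omega
  have hallT : ∀ t, t < T → blocked2 n l1 l2 d ((step n l1 l2 d)^[t] s) := by
    intro t ht
    by_contra hb
    have := moves2_pos n l1 l2 d ht hb
    omega
  have hall : ∀ t, blocked2 n l1 l2 d ((step n l1 l2 d)^[t] s) := by
    intro t
    obtain ⟨t', ht', he⟩ := iter_reduce hT hfix t
    rw [← he]; exact hallT t' ht'
  have hmz : ∀ t, moves2 n l1 l2 d s t = 0 := by
    intro t
    induction t with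
    | zero => exact moves2_zero n l1 l2 d s
    | succ t ih => rw [moves2_succ, ih, if_pos (hall t)]
  have hstay : ∀ t, ((step n l1 l2 d)^[t] s).2 = s.2 := by
    intro t; rw [disp2, hmz]; simp
  have hs2 : s.2 = 0 ∨ s.2 = (d : ZMod n) := by
    have h0 := hall 0
    simp only [Function.iterate_zero_apply] at h0
    rcases h0 with ⟨h, _⟩ | ⟨h, _⟩
    · exact Or.inl h
    · exact Or.inr h
  have hvd : ((d : ZMod n)).val = d := ZMod.val_cast_of_lt (by omega)
  have hv2 : s.2.val = 0 ∨ s.2.val = d := by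
    rcases hs2 with h | h <;> rw [h]
    · exact Or.inl ZMod.val_zero
    · exact Or.inr hvd
  have hnb1 : ∀ t, ¬ blocked1 n l1 l2 d ((step n l1 l2 d)^[t] s) := by
    intro t
    have hb2 := hall t
    have hx2 : ((step n l1 l2 d)^[t] s).2 = s.2 := hstay t
    rw [state_eq_Z hn ((step n l1 l2 d)^[t] s)] at hb2 ⊢
    rw [blocked2_val H (le_of_lt (ZMod.val_lt _)) (le_of_lt (ZMod.val_lt _))] at hb2
    rw [blocked1_val H (le_of_lt (ZMod.val_lt _)) (le_of_lt (ZMod.val_lt _))]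
    have hx2v : ((step n l1 l2 d)^[t] s).2.val = 0 ∨ ((step n l1 l2 d)^[t] s).2.val = d := by
      rw [hx2]; exact hv2
    have := ZMod.val_lt ((step n l1 l2 d)^[t] s).1
    have := ZMod.val_lt ((step n l1 l2 d)^[t] s).2
    omega
  have hmov : ∀ t, moves1 n l1 l2 d s t = t := by
    intro t
    induction t with
    | zero => exact moves1_zero n l1 l2 d s
    | succ t ih => rw [moves1_succ, ih, if_neg (hnb1 t)]
  have hx1 : ((step n l1 l2 d)^[(-s.1).val] s).1 = 0 := by
    rw [disp1, hmov, ZMod.natCast_zmod_val]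
    ring
  have hb2 := hall ((-s.1).val)
  rw [state_eq_Z hn ((step n l1 l2 d)^[(-s.1).val] s)] at hb2
  rw [blocked2_val H (le_of_lt (ZMod.val_lt _)) (le_of_lt (ZMod.val_lt _))] at hb2
  have hx1v : ((step n l1 l2 d)^[(-s.1).val] s).1.val = 0 := by rw [hx1]; exact ZMod.val_zero
  omega

/-! ### paths from states (a, 0) into the two cycles -/

def path1 (d a t : ℕ) : ℕ × ℕ := if t ≤ d - a then (a+t, t) else (d, t)
def path2 (a t : ℕ) : ℕ × ℕ := (a+t, 0)
def path4 (n a t : ℕ) : ℕ × ℕ := if t ≤ n - a then (a+t, t) else (n, t)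
def path5 (n d a t : ℕ) : ℕ × ℕ :=
  if t ≤ n - a then (a+t, t) else if t ≤ d then (a+t-n, t) else (a+t-n, d)
def path6 (n a t : ℕ) : ℕ × ℕ := if t ≤ n - a then (a+t, t) else (a+t-n, t)
def path7 (n d a t : ℕ) : ℕ × ℕ :=
  if t ≤ n - a then (a+t, t) else if t ≤ n + d - a then (a+t-n, t) else (d, t)


lemma path1_step {n l1 l2 d : ℕ} (H : Hyp n l1 l2 d) {a t : ℕ} (hreg : a < d)
    (ht : t + 1 ≤ 2*d - l1) :
    step n l1 l2 d (ZP n (path1 d a t)) = ZP n (path1 d a (t+1)) := by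
  have H' := H
  obtain ⟨hn, hd, h2d, hl1, hl1n, hl2, hl2n, h12, ha1, ha2, ha3, ha4, ha5, ha6⟩ := H'
  rcases (show (t + 1 ≤ d - a) ∨ (t = d - a) ∨ (d - a < t) from by omega)
    with h0 | h1 | h2
  · rw [show path1 d a t = (a+t, t) by unfold path1; rw [if_pos (by omega)],
      show path1 d a (t+1) = (a+(t+1), (t+1)) by unfold path1; rw [if_pos (by omega)], ZP_mk, ZP_mk]
    have hb1 : ¬ blocked1 n l1 l2 d (Z n (a+t) (t)) := by
      rw [blocked1_val H (by omega) (by omega)]; omega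
    have hb2 : ¬ blocked2 n l1 l2 d (Z n (a+t) (t)) := by
      rw [blocked2_val H (by omega) (by omega)]; omega
    rw [step_both hb1 hb2]
    try exact Z_eq hn (by omega) (by omega) (by omega) (by omega) (by omega) (by omega)
  · rw [show path1 d a t = (a+t, t) by unfold path1; rw [if_pos (by omega)],
      show path1 d a (t+1) = (d, (t+1)) by unfold path1; rw [if_neg (by omega)], ZP_mk, ZP_mk]
    have hb1 : blocked1 n l1 l2 d (Z n (a+t) (t)) := by
      rw [blocked1_val H (by omega) (by omega)]; omega
    have hb2 : ¬ blocked2 n l1 l2 d (Z n (a+t) (t)) := by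
      rw [blocked2_val H (by omega) (by omega)]; omega
    rw [step_stall1 hb1 hb2]
    try exact Z_eq hn (by omega) (by omega) (by omega) (by omega) (by omega) (by omega)
  · rw [show path1 d a t = (d, t) by unfold path1; rw [if_neg (by omega)],
      show path1 d a (t+1) = (d, (t+1)) by unfold path1; rw [if_neg (by omega)], ZP_mk, ZP_mk]
    have hb1 : blocked1 n l1 l2 d (Z n (d) (t)) := by
      rw [blocked1_val H (by omega) (by omega)]; omega
    have hb2 : ¬ blocked2 n l1 l2 d (Z n (d) (t)) := by
      rw [blocked2_val H (by omega) (by omega)]; omega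
    rw [step_stall1 hb1 hb2]
    try exact Z_eq hn (by omega) (by omega) (by omega) (by omega) (by omega) (by omega)

lemma path2_step {n l1 l2 d : ℕ} (H : Hyp n l1 l2 d) {a t : ℕ} (hreg : d ≤ a ∧ a < n - l2 - d)
    (ht : t + 1 ≤ n - l2 - d - a) :
    step n l1 l2 d (ZP n (path2 a t)) = ZP n (path2 a (t+1)) := by
  have H' := H
  obtain ⟨hn, hd, h2d, hl1, hl1n, hl2, hl2n, h12, ha1, ha2, ha3, ha4, ha5, ha6⟩ := H'
  rcases (show (True) from trivial)
    with h0
  · rw [show path2 a t = (a+t, 0) from rfl,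
      show path2 a (t+1) = (a+(t+1), 0) from rfl, ZP_mk, ZP_mk]
    have hb1 : ¬ blocked1 n l1 l2 d (Z n (a+t) (0)) := by
      rw [blocked1_val H (by omega) (by omega)]; omega
    have hb2 : blocked2 n l1 l2 d (Z n (a+t) (0)) := by
      rw [blocked2_val H (by omega) (by omega)]; omega
    rw [step_stall2 hb1 hb2]
    try exact Z_eq hn (by omega) (by omega) (by omega) (by omega) (by omega) (by omega)

lemma path4_step {n l1 l2 d : ℕ} (H : Hyp n l1 l2 d) {a t : ℕ} (hreg : l1 + d < a ∧ a ≤ n - d)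
    (ht : t + 1 ≤ n - l1 - d) :
    step n l1 l2 d (ZP n (path4 n a t)) = ZP n (path4 n a (t+1)) := by
  have H' := H
  obtain ⟨hn, hd, h2d, hl1, hl1n, hl2, hl2n, h12, ha1, ha2, ha3, ha4, ha5, ha6⟩ := H'
  rcases (show (t + 1 ≤ n - a) ∨ (t = n - a) ∨ (n - a < t) from by omega)
    with h0 | h1 | h2
  · rw [show path4 n a t = (a+t, t) by unfold path4; rw [if_pos (by omega)],
      show path4 n a (t+1) = (a+(t+1), (t+1)) by unfold path4; rw [if_pos (by omega)], ZP_mk, ZP_mk]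
    have hb1 : ¬ blocked1 n l1 l2 d (Z n (a+t) (t)) := by
      rw [blocked1_val H (by omega) (by omega)]; omega
    have hb2 : ¬ blocked2 n l1 l2 d (Z n (a+t) (t)) := by
      rw [blocked2_val H (by omega) (by omega)]; omega
    rw [step_both hb1 hb2]
    try exact Z_eq hn (by omega) (by omega) (by omega) (by omega) (by omega) (by omega)
  · rw [show path4 n a t = (a+t, t) by unfold path4; rw [if_pos (by omega)],
      show path4 n a (t+1) = (n, (t+1)) by unfold path4; rw [if_neg (by omega)], ZP_mk, ZP_mk]
    have hb1 : blocked1 n l1 l2 d (Z n (a+t) (t)) := by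
      rw [blocked1_val H (by omega) (by omega)]; omega
    have hb2 : ¬ blocked2 n l1 l2 d (Z n (a+t) (t)) := by
      rw [blocked2_val H (by omega) (by omega)]; omega
    rw [step_stall1 hb1 hb2]
    try exact Z_eq hn (by omega) (by omega) (by omega) (by omega) (by omega) (by omega)
  · rw [show path4 n a t = (n, t) by unfold path4; rw [if_neg (by omega)],
      show path4 n a (t+1) = (n, (t+1)) by unfold path4; rw [if_neg (by omega)], ZP_mk, ZP_mk]
    have hb1 : blocked1 n l1 l2 d (Z n (n) (t)) := by
      rw [blocked1_val H (by omega) (by omega)]; omega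
    have hb2 : ¬ blocked2 n l1 l2 d (Z n (n) (t)) := by
      rw [blocked2_val H (by omega) (by omega)]; omega
    rw [step_stall1 hb1 hb2]
    try exact Z_eq hn (by omega) (by omega) (by omega) (by omega) (by omega) (by omega)

lemma path5_step {n l1 l2 d : ℕ} (H : Hyp n l1 l2 d) {a t : ℕ} (hreg : n - d < a ∧ a < n + d - l2)
    (ht : t + 1 ≤ n + 2*d - l2 - a) :
    step n l1 l2 d (ZP n (path5 n d a t)) = ZP n (path5 n d a (t+1)) := by
  have H' := H
  obtain ⟨hn, hd, h2d, hl1, hl1n, hl2, hl2n, h12, ha1, ha2, ha3, ha4, ha5, ha6⟩ := H'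
  rcases (show (t + 1 ≤ n - a) ∨ (t = n - a) ∨ (n - a < t ∧ t + 1 ≤ d) ∨ (t = d) ∨ (d < t) from by omega)
    with h0 | h1 | h2 | h3 | h4
  · rw [show path5 n d a t = (a+t, t) by unfold path5; rw [if_pos (by omega)],
      show path5 n d a (t+1) = (a+(t+1), (t+1)) by unfold path5; rw [if_pos (by omega)], ZP_mk, ZP_mk]
    have hb1 : ¬ blocked1 n l1 l2 d (Z n (a+t) (t)) := by
      rw [blocked1_val H (by omega) (by omega)]; omega
    have hb2 : ¬ blocked2 n l1 l2 d (Z n (a+t) (t)) := by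
      rw [blocked2_val H (by omega) (by omega)]; omega
    rw [step_both hb1 hb2]
    try exact Z_eq hn (by omega) (by omega) (by omega) (by omega) (by omega) (by omega)
  · rw [show path5 n d a t = (a+t, t) by unfold path5; rw [if_pos (by omega)],
      show path5 n d a (t+1) = (a+(t+1)-n, (t+1)) by unfold path5; rw [if_neg (by omega), if_pos (by omega)], ZP_mk, ZP_mk]
    have hb1 : ¬ blocked1 n l1 l2 d (Z n (a+t) (t)) := by
      rw [blocked1_val H (by omega) (by omega)]; omega
    have hb2 : ¬ blocked2 n l1 l2 d (Z n (a+t) (t)) := by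
      rw [blocked2_val H (by omega) (by omega)]; omega
    rw [step_both hb1 hb2]
    try exact Z_eq hn (by omega) (by omega) (by omega) (by omega) (by omega) (by omega)
  · rw [show path5 n d a t = (a+t-n, t) by unfold path5; rw [if_neg (by omega), if_pos (by omega)],
      show path5 n d a (t+1) = (a+(t+1)-n, (t+1)) by unfold path5; rw [if_neg (by omega), if_pos (by omega)], ZP_mk, ZP_mk]
    have hb1 : ¬ blocked1 n l1 l2 d (Z n (a+t-n) (t)) := by
      rw [blocked1_val H (by omega) (by omega)]; omega
    have hb2 : ¬ blocked2 n l1 l2 d (Z n (a+t-n) (t)) := by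
      rw [blocked2_val H (by omega) (by omega)]; omega
    rw [step_both hb1 hb2]
    try exact Z_eq hn (by omega) (by omega) (by omega) (by omega) (by omega) (by omega)
  · rw [show path5 n d a t = (a+t-n, t) by unfold path5; rw [if_neg (by omega), if_pos (by omega)],
      show path5 n d a (t+1) = (a+(t+1)-n, d) by unfold path5; rw [if_neg (by omega), if_neg (by omega)], ZP_mk, ZP_mk]
    have hb1 : ¬ blocked1 n l1 l2 d (Z n (a+t-n) (t)) := by
      rw [blocked1_val H (by omega) (by omega)]; omega
    have hb2 : blocked2 n l1 l2 d (Z n (a+t-n) (t)) := by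
      rw [blocked2_val H (by omega) (by omega)]; omega
    rw [step_stall2 hb1 hb2]
    try exact Z_eq hn (by omega) (by omega) (by omega) (by omega) (by omega) (by omega)
  · rw [show path5 n d a t = (a+t-n, d) by unfold path5; rw [if_neg (by omega), if_neg (by omega)],
      show path5 n d a (t+1) = (a+(t+1)-n, d) by unfold path5; rw [if_neg (by omega), if_neg (by omega)], ZP_mk, ZP_mk]
    have hb1 : ¬ blocked1 n l1 l2 d (Z n (a+t-n) (d)) := by
      rw [blocked1_val H (by omega) (by omega)]; omega
    have hb2 : blocked2 n l1 l2 d (Z n (a+t-n) (d)) := by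
      rw [blocked2_val H (by omega) (by omega)]; omega
    rw [step_stall2 hb1 hb2]
    try exact Z_eq hn (by omega) (by omega) (by omega) (by omega) (by omega) (by omega)

lemma path6_step {n l1 l2 d : ℕ} (H : Hyp n l1 l2 d) {a t : ℕ} (hreg : n + d - l2 < a ∧ a ≤ n + l1 - d ∧ a < n)
    (ht : t + 1 ≤ d) :
    step n l1 l2 d (ZP n (path6 n a t)) = ZP n (path6 n a (t+1)) := by
  have H' := H
  obtain ⟨hn, hd, h2d, hl1, hl1n, hl2, hl2n, h12, ha1, ha2, ha3, ha4, ha5, ha6⟩ := H'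
  rcases (show (t + 1 ≤ n - a) ∨ (t = n - a) ∨ (n - a < t) from by omega)
    with h0 | h1 | h2
  · rw [show path6 n a t = (a+t, t) by unfold path6; rw [if_pos (by omega)],
      show path6 n a (t+1) = (a+(t+1), (t+1)) by unfold path6; rw [if_pos (by omega)], ZP_mk, ZP_mk]
    have hb1 : ¬ blocked1 n l1 l2 d (Z n (a+t) (t)) := by
      rw [blocked1_val H (by omega) (by omega)]; omega
    have hb2 : ¬ blocked2 n l1 l2 d (Z n (a+t) (t)) := by
      rw [blocked2_val H (by omega) (by omega)]; omega
    rw [step_both hb1 hb2]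
    try exact Z_eq hn (by omega) (by omega) (by omega) (by omega) (by omega) (by omega)
  · rw [show path6 n a t = (a+t, t) by unfold path6; rw [if_pos (by omega)],
      show path6 n a (t+1) = (a+(t+1)-n, (t+1)) by unfold path6; rw [if_neg (by omega)], ZP_mk, ZP_mk]
    have hb1 : ¬ blocked1 n l1 l2 d (Z n (a+t) (t)) := by
      rw [blocked1_val H (by omega) (by omega)]; omega
    have hb2 : ¬ blocked2 n l1 l2 d (Z n (a+t) (t)) := by
      rw [blocked2_val H (by omega) (by omega)]; omega
    rw [step_both hb1 hb2]
    try exact Z_eq hn (by omega) (by omega) (by omega) (by omega) (by omega) (by omega)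
  · rw [show path6 n a t = (a+t-n, t) by unfold path6; rw [if_neg (by omega)],
      show path6 n a (t+1) = (a+(t+1)-n, (t+1)) by unfold path6; rw [if_neg (by omega)], ZP_mk, ZP_mk]
    have hb1 : ¬ blocked1 n l1 l2 d (Z n (a+t-n) (t)) := by
      rw [blocked1_val H (by omega) (by omega)]; omega
    have hb2 : ¬ blocked2 n l1 l2 d (Z n (a+t-n) (t)) := by
      rw [blocked2_val H (by omega) (by omega)]; omega
    rw [step_both hb1 hb2]
    try exact Z_eq hn (by omega) (by omega) (by omega) (by omega) (by omega) (by omega)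

lemma path7_step {n l1 l2 d : ℕ} (H : Hyp n l1 l2 d) {a t : ℕ} (hreg : n + l1 - d < a ∧ a < n)
    (ht : t + 1 ≤ 2*d - l1) :
    step n l1 l2 d (ZP n (path7 n d a t)) = ZP n (path7 n d a (t+1)) := by
  have H' := H
  obtain ⟨hn, hd, h2d, hl1, hl1n, hl2, hl2n, h12, ha1, ha2, ha3, ha4, ha5, ha6⟩ := H'
  rcases (show (t + 1 ≤ n - a) ∨ (t = n - a) ∨ (n - a < t ∧ t + 1 ≤ n + d - a) ∨ (t = n + d - a) ∨ (n + d - a < t) from by omega)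
    with h0 | h1 | h2 | h3 | h4
  · rw [show path7 n d a t = (a+t, t) by unfold path7; rw [if_pos (by omega)],
      show path7 n d a (t+1) = (a+(t+1), (t+1)) by unfold path7; rw [if_pos (by omega)], ZP_mk, ZP_mk]
    have hb1 : ¬ blocked1 n l1 l2 d (Z n (a+t) (t)) := by
      rw [blocked1_val H (by omega) (by omega)]; omega
    have hb2 : ¬ blocked2 n l1 l2 d (Z n (a+t) (t)) := by
      rw [blocked2_val H (by omega) (by omega)]; omega
    rw [step_both hb1 hb2]
    try exact Z_eq hn (by omega) (by omega) (by omega) (by omega) (by omega) (by omega)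
  · rw [show path7 n d a t = (a+t, t) by unfold path7; rw [if_pos (by omega)],
      show path7 n d a (t+1) = (a+(t+1)-n, (t+1)) by unfold path7; rw [if_neg (by omega), if_pos (by omega)], ZP_mk, ZP_mk]
    have hb1 : ¬ blocked1 n l1 l2 d (Z n (a+t) (t)) := by
      rw [blocked1_val H (by omega) (by omega)]; omega
    have hb2 : ¬ blocked2 n l1 l2 d (Z n (a+t) (t)) := by
      rw [blocked2_val H (by omega) (by omega)]; omega
    rw [step_both hb1 hb2]
    try exact Z_eq hn (by omega) (by omega) (by omega) (by omega) (by omega) (by omega)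
  · rw [show path7 n d a t = (a+t-n, t) by unfold path7; rw [if_neg (by omega), if_pos (by omega)],
      show path7 n d a (t+1) = (a+(t+1)-n, (t+1)) by unfold path7; rw [if_neg (by omega), if_pos (by omega)], ZP_mk, ZP_mk]
    have hb1 : ¬ blocked1 n l1 l2 d (Z n (a+t-n) (t)) := by
      rw [blocked1_val H (by omega) (by omega)]; omega
    have hb2 : ¬ blocked2 n l1 l2 d (Z n (a+t-n) (t)) := by
      rw [blocked2_val H (by omega) (by omega)]; omega
    rw [step_both hb1 hb2]
    try exact Z_eq hn (by omega) (by omega) (by omega) (by omega) (by omega) (by omega)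
  · rw [show path7 n d a t = (a+t-n, t) by unfold path7; rw [if_neg (by omega), if_pos (by omega)],
      show path7 n d a (t+1) = (d, (t+1)) by unfold path7; rw [if_neg (by omega), if_neg (by omega)], ZP_mk, ZP_mk]
    have hb1 : blocked1 n l1 l2 d (Z n (a+t-n) (t)) := by
      rw [blocked1_val H (by omega) (by omega)]; omega
    have hb2 : ¬ blocked2 n l1 l2 d (Z n (a+t-n) (t)) := by
      rw [blocked2_val H (by omega) (by omega)]; omega
    rw [step_stall1 hb1 hb2]
    try exact Z_eq hn (by omega) (by omega) (by omega) (by omega) (by omega) (by omega)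
  · rw [show path7 n d a t = (d, t) by unfold path7; rw [if_neg (by omega), if_neg (by omega)],
      show path7 n d a (t+1) = (d, (t+1)) by unfold path7; rw [if_neg (by omega), if_neg (by omega)], ZP_mk, ZP_mk]
    have hb1 : blocked1 n l1 l2 d (Z n (d) (t)) := by
      rw [blocked1_val H (by omega) (by omega)]; omega
    have hb2 : ¬ blocked2 n l1 l2 d (Z n (d) (t)) := by
      rw [blocked2_val H (by omega) (by omega)]; omega
    rw [step_stall1 hb1 hb2]
    try exact Z_eq hn (by omega) (by omega) (by omega) (by omega) (by omega) (by omega)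

lemma chain_of_step {n l1 l2 d : ℕ} {p : ℕ → ℕ × ℕ} {L : ℕ}
    (hstep : ∀ t, t + 1 ≤ L → step n l1 l2 d (ZP n (p t)) = ZP n (p (t+1))) :
    ∀ t, t ≤ L → (step n l1 l2 d)^[t] (ZP n (p 0)) = ZP n (p t) := by
  intro t
  induction t with
  | zero => intro _; rfl
  | succ t ih => intro h; rw [Function.iterate_succ_apply', ih (by omega), hstep t h]

lemma reach_AB {n l1 l2 d : ℕ} (H : Hyp n l1 l2 d) {a : ℕ} (ha : a < n) :
    ∃ j, inA n l1 l2 d ((step n l1 l2 d)^[j] (Z n a 0)) ∨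
         inB n l1 l2 d ((step n l1 l2 d)^[j] (Z n a 0)) := by
  have H' := H
  obtain ⟨hn, hd, h2d, hl1, hl1n, hl2, hl2n, h12, ha1, ha2, ha3, ha4, ha5, ha6⟩ := H'
  rcases (show (a < d) ∨ (d ≤ a ∧ a < n - l2 - d) ∨ (n - l2 - d ≤ a ∧ a ≤ l1 + d)
      ∨ (l1 + d < a ∧ a ≤ n - d) ∨ (n - d < a ∧ a < n + d - l2) ∨ (a = n + d - l2)
      ∨ (n + d - l2 < a ∧ a ≤ n + l1 - d ∧ a < n) ∨ (n + l1 - d < a ∧ a < n)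
      from by omega) with R | R | R | R | R | R | R | R
  · -- region 1 → B at orbB (d - l1)
    have h0 : Z n a 0 = ZP n (path1 d a 0) := by
      unfold path1; rw [if_pos (by omega), ZP_mk]
      exact Z_eq hn (by omega) (by omega) (by omega) (by omega) (by omega) (by omega)
    refine ⟨2*d - l1, Or.inr ⟨d - l1, by omega, ?_⟩⟩
    rw [h0, chain_of_step (p := path1 d a) (L := 2*d - l1) (fun t h => path1_step H R h) _ (le_refl _),
      show orbB n l1 l2 d (d-l1) = (l1+(d-l1), d+(d-l1)) by unfold orbB; rw [if_pos (le_refl _)]]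
    by_cases hc : 2*d - l1 ≤ d - a
    · rw [show path1 d a (2*d-l1) = (a+(2*d-l1), 2*d-l1) by unfold path1; rw [if_pos hc],
        ZP_mk, ZP_mk]
      exact Z_eq hn (by omega) (by omega) (by omega) (by omega) (by omega) (by omega)
    · rw [show path1 d a (2*d-l1) = (d, 2*d-l1) by unfold path1; rw [if_neg hc],
        ZP_mk, ZP_mk]
      exact Z_eq hn (by omega) (by omega) (by omega) (by omega) (by omega) (by omega)
  · -- region 2 → A at orbA n
    have h0 : Z n a 0 = ZP n (path2 a 0) := by
      rw [show path2 a 0 = (a+0, 0) from rfl, ZP_mk]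
      exact Z_eq hn (by omega) (by omega) (by omega) (by omega) (by omega) (by omega)
    refine ⟨n - l2 - d - a, Or.inl ⟨n, by omega, ?_⟩⟩
    rw [h0, chain_of_step (p := path2 a) (L := n - l2 - d - a) (fun t h => path2_step H R h) _ (le_refl _)]
    rw [show path2 a (n - l2 - d - a) = (a + (n - l2 - d - a), 0) from rfl]
    unfold orbA
    rw [if_neg (by omega), if_neg (by omega), if_pos (by omega), ZP_mk, ZP_mk]
    exact Z_eq hn (by omega) (by omega) (by omega) (by omega) (by omega) (by omega)
  · -- region 3 : already in A
    refine ⟨0, Or.inl ?_⟩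
    rcases (show a = l1 + d ∨ (a = n - l2 - d ∧ a < l1 + d) ∨ (n - l2 - d < a ∧ a < l1 + d)
        from by omega) with h | h | h
    · refine ⟨0, by omega, ?_⟩
      unfold orbA; rw [if_pos (by omega), ZP_mk]
      simp only [Function.iterate_zero_apply]
      exact Z_eq hn (by omega) (by omega) (by omega) (by omega) (by omega) (by omega)
    · refine ⟨l2 + d + a, by omega, ?_⟩
      unfold orbA; rw [if_neg (by omega), if_neg (by omega), if_pos (by omega), ZP_mk]
      simp only [Function.iterate_zero_apply]
      exact Z_eq hn (by omega) (by omega) (by omega) (by omega) (by omega) (by omega)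
    · refine ⟨l2 + d + a, by omega, ?_⟩
      unfold orbA; rw [if_neg (by omega), if_neg (by omega), if_neg (by omega), ZP_mk]
      simp only [Function.iterate_zero_apply]
      exact Z_eq hn (by omega) (by omega) (by omega) (by omega) (by omega) (by omega)
  · -- region 4 → A at orbA (n - l1 - d)
    have h0 : Z n a 0 = ZP n (path4 n a 0) := by
      unfold path4; rw [if_pos (by omega), ZP_mk]
      exact Z_eq hn (by omega) (by omega) (by omega) (by omega) (by omega) (by omega)
    refine ⟨n - l1 - d, Or.inl ⟨n - l1 - d, by omega, ?_⟩⟩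
    rw [h0, chain_of_step (p := path4 n a) (L := n - l1 - d) (fun t h => path4_step H R h) _ (le_refl _)]
    unfold path4 orbA
    rw [if_neg (by omega), if_pos (by omega), ZP_mk, ZP_mk]
    exact Z_eq hn (by omega) (by omega) (by omega) (by omega) (by omega) (by omega)
  · -- region 5a → B at orbB n
    have h0 : Z n a 0 = ZP n (path5 n d a 0) := by
      unfold path5; rw [if_pos (by omega), ZP_mk]
      exact Z_eq hn (by omega) (by omega) (by omega) (by omega) (by omega) (by omega)
    refine ⟨n + 2*d - l2 - a, Or.inr ⟨n, by omega, ?_⟩⟩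
    rw [h0, chain_of_step (p := path5 n d a) (L := n + 2*d - l2 - a) (fun t h => path5_step H R h) _ (le_refl _)]
    unfold path5 orbB
    rw [if_neg (by omega), if_neg (by omega), if_neg (by omega), if_neg (by omega),
      if_neg (by omega), if_neg (by omega), if_pos (by omega), ZP_mk, ZP_mk]
    exact Z_eq hn (by omega) (by omega) (by omega) (by omega) (by omega) (by omega)
  · -- region 5b : already in B at orbB (n - d)
    refine ⟨0, Or.inr ⟨n - d, by omega, ?_⟩⟩
    unfold orbB
    rw [if_neg (by omega), if_neg (by omega), if_pos (by omega), ZP_mk]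
    simp only [Function.iterate_zero_apply]
    exact Z_eq hn (by omega) (by omega) (by omega) (by omega) (by omega) (by omega)
  · -- region 6 → B
    have h0 : Z n a 0 = ZP n (path6 n a 0) := by
      unfold path6; rw [if_pos (by omega), ZP_mk]
      exact Z_eq hn (by omega) (by omega) (by omega) (by omega) (by omega) (by omega)
    rcases (show a = n + l1 - d ∨ a < n + l1 - d from by omega) with h | h
    · refine ⟨d, Or.inr ⟨0, by omega, ?_⟩⟩
      rw [h0, chain_of_step (p := path6 n a) (L := d) (fun t ht => path6_step H R ht) _ (le_refl _)]
      unfold path6 orbB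
      rw [if_neg (by omega), if_pos (by omega), ZP_mk, ZP_mk]
      exact Z_eq hn (by omega) (by omega) (by omega) (by omega) (by omega) (by omega)
    · refine ⟨d, Or.inr ⟨a + l2 - d, by omega, ?_⟩⟩
      rw [h0, chain_of_step (p := path6 n a) (L := d) (fun t ht => path6_step H R ht) _ (le_refl _)]
      unfold path6 orbB
      rw [if_neg (by omega), if_neg (by omega), if_neg (by omega), if_neg (by omega),
        if_neg (by omega), if_neg (by omega), ZP_mk, ZP_mk]
      exact Z_eq hn (by omega) (by omega) (by omega) (by omega) (by omega) (by omega)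
  · -- region 7 → B at orbB (d - l1)
    have h0 : Z n a 0 = ZP n (path7 n d a 0) := by
      unfold path7; rw [if_pos (by omega), ZP_mk]
      exact Z_eq hn (by omega) (by omega) (by omega) (by omega) (by omega) (by omega)
    refine ⟨2*d - l1, Or.inr ⟨d - l1, by omega, ?_⟩⟩
    rw [h0, chain_of_step (p := path7 n d a) (L := 2*d - l1) (fun t h => path7_step H R h) _ (le_refl _)]
    unfold path7 orbB
    rw [if_neg (by omega), if_neg (by omega), if_pos (by omega), ZP_mk, ZP_mk]
    exact Z_eq hn (by omega) (by omega) (by omega) (by omega) (by omega) (by omega)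

/-! ### classification of periodic states -/

lemma classify {n l1 l2 d : ℕ} (H : Hyp n l1 l2 d) {s : State n} {T : ℕ}
    (hT : 0 < T) (hfix : (step n l1 l2 d)^[T] s = s) :
    inA n l1 l2 d s ∨ inB n l1 l2 d s := by
  have H' := H
  obtain ⟨hn, hd, h2d, hl1, hl1n, hl2, hl2n, h12, ha1, ha2, ha3, ha4, ha5, ha6⟩ := H'
  haveI : NeZero n := ⟨hn.ne'⟩
  have hm2 := moves2_periodic_pos H hT hfix
  have hdvd := moves2_dvd n l1 l2 d hn hfix
  have hm2n : n ≤ moves2 n l1 l2 d s T := Nat.le_of_dvd hm2 hdvd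
  have hv : (-(s.2)).val < n := ZMod.val_lt _
  obtain ⟨t0, ht0, hval⟩ := hit_value (moves2_zero n l1 l2 d s)
      (fun t => by rw [moves2_succ]; split <;> omega) T ((-(s.2)).val) (by omega)
  have hzero : ((step n l1 l2 d)^[t0] s).2 = 0 := by
    rw [disp2, hval, ZMod.natCast_zmod_val]; ring
  have hsZ : (step n l1 l2 d)^[t0] s
      = Z n (((step n l1 l2 d)^[t0] s).1.val) 0 := by
    have h := state_eq_Z hn ((step n l1 l2 d)^[t0] s)
    rwa [show ((step n l1 l2 d)^[t0] s).2.val = 0 by rw [hzero]; exact ZMod.val_zero] at h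
  obtain ⟨j, hAB⟩ := reach_AB H (a := ((step n l1 l2 d)^[t0] s).1.val) (ZMod.val_lt _)
  rw [← hsZ] at hAB
  have hinv : ∀ (x : State n), (inA n l1 l2 d x ∨ inB n l1 l2 d x) → ∀ m,
      inA n l1 l2 d ((step n l1 l2 d)^[m] x) ∨ inB n l1 l2 d ((step n l1 l2 d)^[m] x) := by
    intro x hx m
    induction m with
    | zero => simpa using hx
    | succ m ih =>
      rw [Function.iterate_succ_apply']
      rcases ih with h | h
      · exact Or.inl (inA_step H h)
      · exact Or.inr (inB_step H h)
  have hfix' : (step n l1 l2 d)^[T] ((step n l1 l2 d)^[t0] s)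
      = (step n l1 l2 d)^[t0] s := by
    rw [← Function.iterate_add_apply, Nat.add_comm, Function.iterate_add_apply, hfix]
  have hfixk : ∀ k, (step n l1 l2 d)^[k*T] ((step n l1 l2 d)^[t0] s)
      = (step n l1 l2 d)^[t0] s := by
    intro k
    rw [Nat.mul_comm, Function.iterate_mul]
    exact Function.iterate_fixed hfix' k
  have hs'AB : inA n l1 l2 d ((step n l1 l2 d)^[t0] s)
      ∨ inB n l1 l2 d ((step n l1 l2 d)^[t0] s) := by
    have hj : j + 1 ≤ (j+1)*T := Nat.le_mul_of_pos_right _ hT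
    have h2 := hinv _ (hinv _ hAB 0) ((j+1)*T - j)
    rw [Function.iterate_zero_apply] at h2
    rw [← Function.iterate_add_apply, show (j+1)*T - j + j = (j+1)*T by omega] at h2
    rwa [hfixk (j+1)] at h2
  have hfixkS : ∀ k, (step n l1 l2 d)^[k*T] s = s := by
    intro k
    rw [Nat.mul_comm, Function.iterate_mul]
    exact Function.iterate_fixed hfix k
  have hj : t0 + 1 ≤ (t0+1)*T := Nat.le_mul_of_pos_right _ hT
  have h2 := hinv _ hs'AB ((t0+1)*T - t0)
  rw [← Function.iterate_add_apply, show (t0+1)*T - t0 + t0 = (t0+1)*T by omega] at h2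
  rwa [hfixkS (t0+1)] at h2

lemma moves1_eq_of (n l1 l2 d : ℕ) {s : State n} {T P : ℕ}
    (hfixT : (step n l1 l2 d)^[T] s = s) (hfixP : (step n l1 l2 d)^[P] s = s)
    (hP : moves1 n l1 l2 d s P = n) : moves1 n l1 l2 d s T * P = n * T := by
  have h1 := moves1_mul n l1 l2 d hfixP T
  have h2 := moves1_mul n l1 l2 d hfixT P
  rw [hP] at h1
  have h3 : P * moves1 n l1 l2 d s T = T * n := by rw [← h2, Nat.mul_comm P T, h1]
  calc moves1 n l1 l2 d s T * P = P * moves1 n l1 l2 d s T := Nat.mul_comm _ _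
    _ = T * n := h3
    _ = n * T := Nat.mul_comm _ _

lemma moves2_eq_of (n l1 l2 d : ℕ) {s : State n} {T P : ℕ}
    (hfixT : (step n l1 l2 d)^[T] s = s) (hfixP : (step n l1 l2 d)^[P] s = s)
    (hP : moves2 n l1 l2 d s P = n) : moves2 n l1 l2 d s T * P = n * T := by
  have h1 := moves2_mul n l1 l2 d hfixP T
  have h2 := moves2_mul n l1 l2 d hfixT P
  rw [hP] at h1
  have h3 : P * moves2 n l1 l2 d s T = T * n := by rw [← h2, Nat.mul_comm P T, h1]
  calc moves2 n l1 l2 d s T * P = P * moves2 n l1 l2 d s T := Nat.mul_comm _ _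
    _ = T * n := h3
    _ = n * T := Nat.mul_comm _ _
theorem stmt8 (n l1 l2 d : ℕ) (hn : 0 < n) (hd : 0 < d) (h2d : 2 * d ≤ n)
    (hl1pos : 0 < l1) (hl1n : l1 < n) (hl2pos : 0 < l2) (hl2n : l2 < n) (h12 : l1 ≤ l2)
    (h1 : l1 ≤ d) (h2 : d < l2) (h3 : l2 < 2 * d) (h4 : l2 ≤ n - 2 * d)
    (h5 : l1 + l2 > 2 * d) (h6 : l1 + l2 > n - 2 * d) :
    (Periodic n l1 l2 d (((l1 + d : ℕ) : ZMod n), (0 : ZMod n)) (l1 + l2 + 2 * d) ∧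
     moves1 n l1 l2 d (((l1 + d : ℕ) : ZMod n), (0 : ZMod n)) (l1 + l2 + 2 * d) = n ∧
     moves2 n l1 l2 d (((l1 + d : ℕ) : ZMod n), (0 : ZMod n)) (l1 + l2 + 2 * d) = n ∧
     (∃ t : ℕ, (step n l1 l2 d)^[t] (((l1 + d : ℕ) : ZMod n), (0 : ZMod n)) =
        ((0 : ZMod n), ((l2 + d : ℕ) : ZMod n)))) ∧
    (Periodic n l1 l2 d (((l1 : ℕ) : ZMod n), ((d : ℕ) : ZMod n)) (l1 + l2 + (n - 2 * d)) ∧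
     moves1 n l1 l2 d (((l1 : ℕ) : ZMod n), ((d : ℕ) : ZMod n)) (l1 + l2 + (n - 2 * d)) = n ∧
     moves2 n l1 l2 d (((l1 : ℕ) : ZMod n), ((d : ℕ) : ZMod n)) (l1 + l2 + (n - 2 * d)) = n ∧
     (∃ t : ℕ, (step n l1 l2 d)^[t] (((l1 : ℕ) : ZMod n), ((d : ℕ) : ZMod n)) =
        (((d : ℕ) : ZMod n), ((l2 : ℕ) : ZMod n)))) ∧
    (∀ (s : State n) (T : ℕ), Admissible n l1 l2 d s → Periodic n l1 l2 d s T →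
      (moves1 n l1 l2 d s T * (l1 + l2 + 2 * d) = n * T ∧
       moves2 n l1 l2 d s T * (l1 + l2 + 2 * d) = n * T) ∨
      (moves1 n l1 l2 d s T * (l1 + l2 + (n - 2 * d)) = n * T ∧
       moves2 n l1 l2 d s T * (l1 + l2 + (n - 2 * d)) = n * T)) := by
  have H : Hyp n l1 l2 d :=
    ⟨hn, hd, h2d, hl1pos, hl1n, hl2pos, hl2n, h12, h1, h2, h3, h4, h5, h6⟩
  haveI : NeZero n := ⟨hn.ne'⟩
  have hkey : 2*d + l2 ≤ n := by omega
  have hkey2 : n < l1 + l2 + 2*d := by omega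
  have epp : l1 + l2 + (n - 2*d) = n + l1 + l2 - 2*d := by omega
  refine ⟨?_, ?_, ?_⟩
  · -- cycle A
    have hs0 : (((l1 + d : ℕ) : ZMod n), (0 : ZMod n)) = ZP n (orbA n l1 l2 d 0) := by
      unfold orbA; rw [if_pos (by omega), ZP_mk]
      unfold Z; rw [Prod.ext_iff]; constructor <;> simp
    have hA0 : inA n l1 l2 d (((l1 + d : ℕ) : ZMod n), (0 : ZMod n)) := ⟨0, by omega, hs0⟩
    refine ⟨⟨by omega, inA_fix H hA0⟩, inA_moves1 H hA0, inA_moves2 H hA0, ⟨l2 + d, ?_⟩⟩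
    rw [hs0, orbA_chain H (l2+d) 0 (by omega), Nat.zero_add]
    unfold orbA
    rw [if_neg (by omega), if_pos (le_refl _), ZP_mk]
    unfold Z
    rw [Prod.ext_iff]
    constructor
    · simp [ZMod.natCast_self]
    · rfl
  · -- cycle B
    have hs1 : (((l1 : ℕ) : ZMod n), ((d : ℕ) : ZMod n)) = ZP n (orbB n l1 l2 d 0) := by
      unfold orbB; rw [if_pos (by omega), ZP_mk]
      unfold Z; rw [Prod.ext_iff]; constructor <;> simp
    have hB0 : inB n l1 l2 d (((l1 : ℕ) : ZMod n), ((d : ℕ) : ZMod n)) :=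
      ⟨0, by omega, hs1⟩
    rw [epp]
    refine ⟨⟨by omega, inB_fix H hB0⟩, inB_moves1 H hB0, inB_moves2 H hB0, ⟨l2 - d, ?_⟩⟩
    rw [hs1, orbB_chain H (l2-d) 0 (by omega), Nat.zero_add]
    unfold orbB
    rw [if_neg (by omega), if_pos (le_refl _), ZP_mk]
    unfold Z
    rw [Prod.ext_iff]
    constructor
    · rfl
    · rw [show d + (l2 - d) = l2 by omega]
  · -- uniqueness of velocities
    intro s T _hadm hper
    obtain ⟨hT0, hfix⟩ := hper
    rcases classify H hT0 hfix with hA | hB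
    · left
      have hfixA := inA_fix H hA
      exact ⟨moves1_eq_of n l1 l2 d hfix hfixA (inA_moves1 H hA),
        moves2_eq_of n l1 l2 d hfix hfixA (inA_moves2 H hA)⟩
    · right
      rw [epp]
      have hfixB := inB_fix H hB
      exact ⟨moves1_eq_of n l1 l2 d hfix hfixB (inB_moves1 H hB),
        moves2_eq_of n l1 l2 d hfix hfixB (inB_moves2 H hB)⟩

end TwoContour
end

section
/- If d < l₁ < 2d, d < l₂ < 2d, and l₁ + l₂ ≤ n − 2d, then depending on the initial state the two-contour system either enters a state of free motion or reaches the collapse state (d, d): the states (l₁+d, 0) and (0, l₂+d) lie on free-motion cycles of period n, while from states (l₁, d) and (d, l₂) the system reaches (d, d) in at most n steps and never moves again. -/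
open scoped Classical

namespace TwoContour

-- helpers
lemma occ_iff {n : ℕ} (hn : 0 < n) {l : ℕ} (hl : l ≤ n) (α c : ZMod n) :
    occ n α l c ↔ (α - c).val < l := by
  haveI : NeZero n := ⟨hn.ne'⟩
  constructor
  · rintro ⟨k, hk, rfl⟩
    have h : α - (α - (k : ZMod n)) = (k : ZMod n) := by ring
    rw [h, ZMod.val_cast_of_lt (lt_of_lt_of_le hk hl)]
    exact hk
  · intro h
    exact ⟨(α - c).val, h, by rw [ZMod.natCast_rightInverse (α - c)]; ring⟩

lemma sub_cast_eq (n x y z : ℕ) (h : x + z = y ∨ x + z = y + n) :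
    (y : ZMod n) - (z : ZMod n) = (x : ZMod n) := by
  rcases h with h | h
  · have h' : ((y : ℕ) : ZMod n) = ((x + z : ℕ) : ZMod n) := by rw [h]
    push_cast at h'
    linear_combination h'
  · have h' : ((y + n : ℕ) : ZMod n) = ((x + z : ℕ) : ZMod n) := by rw [h]
    have h0 : ((n : ℕ) : ZMod n) = 0 := ZMod.natCast_self n
    push_cast at h'
    linear_combination h' - h0

lemma cc (n x y : ℕ) : ((x : ZMod n) = (y : ZMod n)) ↔ x % n = y % n :=
  ZMod.natCast_eq_natCast_iff' x y n

lemma mod_info {n : ℕ} (x : ℕ) (hn : 0 < n) (h : x < 2 * n) :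
    (x % n = x ∧ x < n) ∨ (x % n = x - n ∧ n ≤ x) := by
  rcases lt_or_ge x n with h' | h'
  · exact Or.inl ⟨Nat.mod_eq_of_lt h', h'⟩
  · exact Or.inr ⟨by rw [Nat.mod_eq_sub_mod h', Nat.mod_eq_of_lt (by omega)], h'⟩

lemma iterate_eq_of {α : Type*} (f : α → α) (g : ℕ → α) (s : α) (T : ℕ)
    (h0 : g 0 = s) (h : ∀ t, t < T → f (g t) = g (t + 1)) : f^[T] s = g T := by
  induction T with
  | zero => simpa using h0.symm
  | succ T ih =>
    rw [Function.iterate_succ_apply', ih (fun t ht => h t (by omega)), h T (by omega)]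


section Main
variable {n l1 l2 d : ℕ}
variable (hn : 0 < n) (hd : 0 < d)
    (hl1n : l1 < n) (hl2n : l2 < n)
    (h1 : d < l1) (h2 : l1 < 2 * d) (h3 : d < l2) (h4 : l2 < 2 * d)
    (h5 : l1 + l2 + 2 * d ≤ n)

include hn hd hl1n hl2n h1 h2 h3 h4 h5 in
lemma free_step (a b : ZMod n) (hab : b = a - ((l1 + d : ℕ) : ZMod n)) :
    ¬ blocked1 n l1 l2 d (a, b) ∧ ¬ blocked2 n l1 l2 d (a, b) ∧
      step n l1 l2 d (a, b) = (a + 1, b + 1) := by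
  haveI : NeZero n := ⟨hn.ne'⟩
  have hnb1 : ¬ blocked1 n l1 l2 d (a, b) := by
    rintro (⟨ha, hr⟩ | ⟨ha, h0, _⟩)
    · simp only at ha
      have hb : b = ((n - (l1 + d) : ℕ) : ZMod n) := by
        rw [hab, ha]
        have := sub_cast_eq n (n - (l1 + d)) 0 (l1 + d) (Or.inr (by omega))
        rw [← this]; push_cast; ring
      rcases hr with ⟨hoD, _⟩ | hbd
      · rw [occ_iff hn hl2n.le] at hoD
        rw [hb, sub_cast_eq n (n - (l1 + 2 * d)) (n - (l1 + d)) d (Or.inl (by omega)),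
          ZMod.val_cast_of_lt (by omega)] at hoD
        omega
      · rw [hb, cc, Nat.mod_eq_of_lt (by omega), Nat.mod_eq_of_lt (by omega)] at hbd
        omega
    · simp only at ha
      have hb : b = ((n - l1 : ℕ) : ZMod n) := by
        rw [hab, ha, sub_cast_eq n (n - l1) d (l1 + d) (Or.inr (by omega))]
      rw [occ_iff hn hl2n.le, hb, sub_zero, ZMod.val_cast_of_lt (by omega)] at h0
      omega
  have hnb2 : ¬ blocked2 n l1 l2 d (a, b) := by
    have hab' : a = b + ((l1 + d : ℕ) : ZMod n) := by rw [hab]; ring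
    rintro (⟨hb, hr⟩ | ⟨hb, h0, _⟩)
    · simp only at hb
      have ha : a = ((l1 + d : ℕ) : ZMod n) := by rw [hab', hb, zero_add]
      rcases hr with ⟨hoD, _⟩ | had
      · rw [occ_iff hn hl1n.le] at hoD
        rw [ha, sub_cast_eq n l1 (l1 + d) d (Or.inl (by omega)),
          ZMod.val_cast_of_lt (by omega)] at hoD
        omega
      · rw [ha, cc, Nat.mod_eq_of_lt (by omega), Nat.mod_eq_of_lt (by omega)] at had
        omega
    · simp only at hb
      have ha : a = ((l1 + 2 * d : ℕ) : ZMod n) := by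
        rw [hab', hb]
        have : ((l1 + 2 * d : ℕ) : ZMod n) = ((d : ℕ) : ZMod n) + ((l1 + d : ℕ) : ZMod n) := by
          push_cast; ring
        rw [this]
      rw [occ_iff hn hl1n.le, ha, sub_zero, ZMod.val_cast_of_lt (by omega)] at h0
      omega
  refine ⟨hnb1, hnb2, ?_⟩
  simp only [step]
  rw [if_neg hnb1, if_neg hnb2]

include hn hd hl1n hl2n h1 h2 h3 h4 h5 in
lemma free_iter : ∀ t : ℕ,
    (step n l1 l2 d)^[t] (((l1 + d : ℕ) : ZMod n), (0 : ZMod n)) =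
      (((l1 + d : ℕ) : ZMod n) + (t : ZMod n), (t : ZMod n)) := by
  intro t
  induction t with
  | zero => simp
  | succ t ih =>
    rw [Function.iterate_succ_apply', ih]
    have h := free_step hn hd hl1n hl2n h1 h2 h3 h4 h5
      (((l1 + d : ℕ) : ZMod n) + (t : ZMod n)) ((t : ZMod n)) (by ring)
    rw [h.2.2]
    push_cast
    rw [Prod.mk.injEq]
    exact ⟨by ring, by ring⟩

include hn hd hl1n hl2n h1 h2 h3 h4 h5 in
lemma free_main :
    (0 < n ∧ (step n l1 l2 d)^[n] (((l1 + d : ℕ) : ZMod n), (0 : ZMod n)) =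
      (((l1 + d : ℕ) : ZMod n), (0 : ZMod n))) ∧
    (∀ t : ℕ, ¬ blocked1 n l1 l2 d ((step n l1 l2 d)^[t] (((l1 + d : ℕ) : ZMod n), (0 : ZMod n))) ∧
      ¬ blocked2 n l1 l2 d ((step n l1 l2 d)^[t] (((l1 + d : ℕ) : ZMod n), (0 : ZMod n)))) := by
  have hfi := free_iter hn hd hl1n hl2n h1 h2 h3 h4 h5
  refine ⟨⟨hn, ?_⟩, fun t => ?_⟩
  · rw [hfi n, ZMod.natCast_self]; simp
  · rw [hfi t]
    have h := free_step hn hd hl1n hl2n h1 h2 h3 h4 h5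
      (((l1 + d : ℕ) : ZMod n) + (t : ZMod n)) ((t : ZMod n)) (by ring)
    exact ⟨h.1, h.2.1⟩

include hn hd hl1n hl2n h1 h2 h3 h4 h5 in
lemma reach_step (t : ℕ) (ht : t < n) :
    step n l1 l2 d (((l1 + min t (n - l1 + d) : ℕ) : ZMod n), ((d + t : ℕ) : ZMod n)) =
      (((l1 + min (t + 1) (n - l1 + d) : ℕ) : ZMod n), ((d + (t + 1) : ℕ) : ZMod n)) := by
  haveI : NeZero n := ⟨hn.ne'⟩
  have hz : (0 : ZMod n) = ((0 : ℕ) : ZMod n) := by norm_num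
  have ho : (1 : ZMod n) = ((1 : ℕ) : ZMod n) := by norm_num
  rcases lt_or_ge t (n - l1 + d) with htm | htm
  · -- both move
    rw [min_eq_left htm.le, min_eq_left (by omega)]
    have hnb1 : ¬ blocked1 n l1 l2 d (((l1 + t : ℕ) : ZMod n), ((d + t : ℕ) : ZMod n)) := by
      rintro (⟨ha, hr⟩ | ⟨ha, h0, _⟩)
      · simp only [hz, cc] at ha
        have e0 : (0 : ℕ) % n = 0 := Nat.zero_mod n
        have e1 := mod_info (l1 + t) hn (by omega)
        have htv : t = n - l1 := by omega
        rcases hr with ⟨hoD, _⟩ | hbd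
        · rw [occ_iff hn hl2n.le,
            sub_cast_eq n t (d + t) d (Or.inl (by omega)),
            ZMod.val_cast_of_lt (by omega)] at hoD
          omega
        · rw [cc] at hbd
          have e2 := mod_info (d + t) hn (by omega)
          have e3 := mod_info d hn (by omega)
          omega
      · simp only [cc] at ha
        have e1 := mod_info (l1 + t) hn (by omega)
        have e3 := mod_info d hn (by omega)
        omega
    have hnb2 : ¬ blocked2 n l1 l2 d (((l1 + t : ℕ) : ZMod n), ((d + t : ℕ) : ZMod n)) := by
      rintro (⟨hb, hr⟩ | ⟨hb, h0, _⟩)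
      · simp only [hz, cc] at hb
        have e0 : (0 : ℕ) % n = 0 := Nat.zero_mod n
        have e2 := mod_info (d + t) hn (by omega)
        have htv : t = n - d := by omega
        rcases hr with ⟨hoD, _⟩ | had
        · rw [occ_iff hn hl1n.le,
            sub_cast_eq n (n + l1 - 2 * d) (l1 + t) d (Or.inl (by omega)),
            ZMod.val_cast_of_lt (by omega)] at hoD
          omega
        · rw [cc] at had
          have e1 := mod_info (l1 + t) hn (by omega)
          have e3 := mod_info d hn (by omega)
          omega
      · simp only [cc] at hb
        have e2 := mod_info (d + t) hn (by omega)
        have e3 := mod_info d hn (by omega)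
        have ht0 : t = 0 := by omega
        rw [occ_iff hn hl1n.le, sub_zero, ht0, ZMod.val_cast_of_lt (by omega)] at h0
        omega
    simp only [step]
    rw [if_neg hnb1, if_neg hnb2]
    rw [Prod.mk.injEq]
    constructor <;> · push_cast; ring
  · -- cluster 1 blocked at d, cluster 2 moves
    rw [min_eq_right htm, min_eq_right (by omega)]
    have hval : ((d + t : ℕ) : ZMod n).val = d + t - n := by
      rw [ZMod.val_natCast, Nat.mod_eq_sub_mod (by omega), Nat.mod_eq_of_lt (by omega)]
    have hb1 : blocked1 n l1 l2 d
        (((l1 + (n - l1 + d) : ℕ) : ZMod n), ((d + t : ℕ) : ZMod n)) := by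
      refine Or.inr ⟨?_, ?_, ?_⟩
      · simp only [cc]
        have e1 := mod_info (l1 + (n - l1 + d)) hn (by omega)
        have e3 := mod_info d hn (by omega)
        omega
      · rw [occ_iff hn hl2n.le, sub_zero, hval]
        omega
      · rw [occ_iff hn hl2n.le, ho,
          sub_cast_eq n (d + t - 1) (d + t) 1 (Or.inl (by omega)),
          ZMod.val_natCast, Nat.mod_eq_sub_mod (by omega), Nat.mod_eq_of_lt (by omega)]
        omega
    have hnb2 : ¬ blocked2 n l1 l2 d
        (((l1 + (n - l1 + d) : ℕ) : ZMod n), ((d + t : ℕ) : ZMod n)) := by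
      rintro (⟨hb, _⟩ | ⟨hb, _, _⟩)
      · simp only [hz, cc] at hb
        have e0 : (0 : ℕ) % n = 0 := Nat.zero_mod n
        have e2 := mod_info (d + t) hn (by omega)
        omega
      · simp only [cc] at hb
        have e2 := mod_info (d + t) hn (by omega)
        have e3 := mod_info d hn (by omega)
        omega
    simp only [step]
    rw [if_pos hb1, if_neg hnb2]
    rw [Prod.mk.injEq]
    constructor
    · rfl
    · push_cast; ring

include hn hd hl1n hl2n h1 h2 h3 h4 h5 in
lemma reach_main :
    (step n l1 l2 d)^[n] (((l1 : ℕ) : ZMod n), ((d : ℕ) : ZMod n)) =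
      (((d : ℕ) : ZMod n), ((d : ℕ) : ZMod n)) := by
  have h := iterate_eq_of (step n l1 l2 d)
    (fun t => (((l1 + min t (n - l1 + d) : ℕ) : ZMod n), ((d + t : ℕ) : ZMod n)))
    (((l1 : ℕ) : ZMod n), ((d : ℕ) : ZMod n)) n
    (by simp) (fun t ht => reach_step hn hd hl1n hl2n h1 h2 h3 h4 h5 t ht)
  rw [h]
  rw [min_eq_right (by omega), Prod.mk.injEq]
  constructor
  · rw [cc]
    have e1 := mod_info (l1 + (n - l1 + d)) hn (by omega)
    have e3 := mod_info d hn (by omega)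
    omega
  · rw [cc]
    have e2 := mod_info (d + n) hn (by omega)
    have e3 := mod_info d hn (by omega)
    omega

end Main
lemma step_swap (n l1 l2 d : ℕ) (s : State n) :
    step n l2 l1 d (s.2, s.1) = ((step n l1 l2 d s).2, (step n l1 l2 d s).1) := rfl

lemma iterate_swap (n l1 l2 d : ℕ) (s : State n) (t : ℕ) :
    (step n l2 l1 d)^[t] (s.2, s.1) =
      (((step n l1 l2 d)^[t] s).2, ((step n l1 l2 d)^[t] s).1) := by
  induction t generalizing s with
  | zero => rfl
  | succ t ih =>
    rw [Function.iterate_succ_apply, Function.iterate_succ_apply, step_swap,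
      ih (step n l1 l2 d s)]

section Main2
variable {n l1 l2 d : ℕ}
variable (hn : 0 < n) (hd : 0 < d)
    (hl1n : l1 < n) (hl2n : l2 < n)
    (h1 : d < l1) (h3 : d < l2)

include hn hd hl1n hl2n h1 h3 in
lemma collapse_main :
    ∀ t : ℕ, blocked1 n l1 l2 d
        ((step n l1 l2 d)^[t] (((d : ℕ) : ZMod n), ((d : ℕ) : ZMod n))) ∧
      blocked2 n l1 l2 d
        ((step n l1 l2 d)^[t] (((d : ℕ) : ZMod n), ((d : ℕ) : ZMod n))) := by
  haveI : NeZero n := ⟨hn.ne'⟩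
  have ho : (1 : ZMod n) = ((1 : ℕ) : ZMod n) := by norm_num
  have hbl1 : blocked1 n l1 l2 d (((d : ℕ) : ZMod n), ((d : ℕ) : ZMod n)) := by
    refine Or.inr ⟨rfl, ?_, ?_⟩
    · rw [occ_iff hn hl2n.le, sub_zero, ZMod.val_cast_of_lt (by omega)]; omega
    · rw [occ_iff hn hl2n.le, ho, sub_cast_eq n (d - 1) d 1 (Or.inl (by omega)),
        ZMod.val_cast_of_lt (by omega)]
      omega
  have hbl2 : blocked2 n l1 l2 d (((d : ℕ) : ZMod n), ((d : ℕ) : ZMod n)) := by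
    refine Or.inr ⟨rfl, ?_, ?_⟩
    · rw [occ_iff hn hl1n.le, sub_zero, ZMod.val_cast_of_lt (by omega)]; omega
    · rw [occ_iff hn hl1n.le, ho, sub_cast_eq n (d - 1) d 1 (Or.inl (by omega)),
        ZMod.val_cast_of_lt (by omega)]
      omega
  have hfix : step n l1 l2 d (((d : ℕ) : ZMod n), ((d : ℕ) : ZMod n)) =
      (((d : ℕ) : ZMod n), ((d : ℕ) : ZMod n)) := by
    simp only [step]
    rw [if_pos hbl1, if_pos hbl2]
  intro t
  rw [Function.iterate_fixed hfix t]
  exact ⟨hbl1, hbl2⟩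

end Main2

theorem stmt13 (n l1 l2 d : ℕ) (hn : 0 < n) (hd : 0 < d) (h2d : 2 * d ≤ n)
    (hl1pos : 0 < l1) (hl1n : l1 < n) (hl2pos : 0 < l2) (hl2n : l2 < n) (h12 : l1 ≤ l2)
    (h1 : d < l1) (h2 : l1 < 2 * d) (h3 : d < l2) (h4 : l2 < 2 * d)
    (h5 : l1 + l2 ≤ n - 2 * d) :
    (Periodic n l1 l2 d (((l1 + d : ℕ) : ZMod n), (0 : ZMod n)) n ∧
     FreeState n l1 l2 d (((l1 + d : ℕ) : ZMod n), (0 : ZMod n))) ∧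
    (Periodic n l1 l2 d ((0 : ZMod n), ((l2 + d : ℕ) : ZMod n)) n ∧
     FreeState n l1 l2 d ((0 : ZMod n), ((l2 + d : ℕ) : ZMod n))) ∧
    (∃ t ≤ n, (step n l1 l2 d)^[t] (((l1 : ℕ) : ZMod n), ((d : ℕ) : ZMod n)) =
        (((d : ℕ) : ZMod n), ((d : ℕ) : ZMod n))) ∧
    (∃ t ≤ n, (step n l1 l2 d)^[t] (((d : ℕ) : ZMod n), ((l2 : ℕ) : ZMod n)) =
        (((d : ℕ) : ZMod n), ((d : ℕ) : ZMod n))) ∧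
    CollapseState n l1 l2 d (((d : ℕ) : ZMod n), ((d : ℕ) : ZMod n)) := by
  have h5' : l1 + l2 + 2 * d ≤ n := by omega
  have h5'' : l2 + l1 + 2 * d ≤ n := by omega
  have A := free_main hn hd hl1n hl2n h1 h2 h3 h4 h5'
  have B := free_main hn hd hl2n hl1n h3 h4 h1 h2 h5''
  have hsw : ∀ t : ℕ, (step n l2 l1 d)^[t] (((l2 + d : ℕ) : ZMod n), (0 : ZMod n)) =
      (((step n l1 l2 d)^[t] ((0 : ZMod n), ((l2 + d : ℕ) : ZMod n))).2,
       ((step n l1 l2 d)^[t] ((0 : ZMod n), ((l2 + d : ℕ) : ZMod n))).1) :=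
    fun t => iterate_swap n l1 l2 d ((0 : ZMod n), ((l2 + d : ℕ) : ZMod n)) t
  refine ⟨⟨⟨hn, A.1.2⟩, A.2⟩, ⟨⟨hn, ?_⟩, ?_⟩, ⟨n, le_refl n, ?_⟩, ⟨n, le_refl n, ?_⟩, ?_⟩
  · -- Periodic for (0, l2+d)
    have hB := B.1.2
    rw [hsw n, Prod.mk.injEq] at hB
    exact Prod.ext_iff.mpr ⟨hB.2, hB.1⟩
  · -- FreeState for (0, l2+d)
    intro t
    have hB := B.2 t
    rw [hsw t] at hB
    exact ⟨hB.2, hB.1⟩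
  · exact reach_main hn hd hl1n hl2n h1 h2 h3 h4 h5'
  · -- (d, l2) reaches (d, d)
    have hR := reach_main hn hd hl2n hl1n h3 h4 h1 h2 h5''
    have hs := iterate_swap n l1 l2 d (((d : ℕ) : ZMod n), ((l2 : ℕ) : ZMod n)) n
    simp only at hs
    rw [hR] at hs
    have hs' := hs.symm
    rw [Prod.mk.injEq] at hs'
    exact Prod.ext_iff.mpr ⟨hs'.2, hs'.1⟩
  · exact collapse_main hn hd hl1n hl2n h1 h3

end TwoContour
end
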